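/- arXiv:1810.04055 — 8 statements merged into one kernel-verified Lean document; each statement's English description precedes it below -/
import Mathlib

section
/- A monic polynomial f ∈ ℝ[t] of degree d has all its complex roots real if and only if its Hermite matrix H(f), the d×d real symmetric matrix whose (i,j) entry is the (i+j-2)-th power sum of the complex roots of f, is positive semidefinite. -/
/-!
For `x ∈ ℝᵈ` put `pₓ = ∑ xᵢ tⁱ`; then `xᵀ H x = ∑ pₓ(r)²`, summed over the complex roots `r` of `f`
with multiplicity. If all roots are real, this is a sum of real squares. Conversely, let `z` be a
non-real root and `g = (t - z)(t - z̄) ∈ ℝ[t]`. Write `f = gᵏ q` with `g ∤ q`, so that `k ≥ 1` and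
`q(z) ≠ 0`. As `1, z` span `ℂ` over `ℝ`, some real linear `ℓ` makes `p = ℓ q` satisfy `p(z) = i`,
hence `p(z̄) = -i`; `p` vanishes at the roots of `q` and has degree `< d`, so the form at the
coefficients of `p` equals `k (i² + (-i)²) = -2k < 0`.
-/

def RealRooted (p : Polynomial ℝ) : Prop :=
  ∀ z : ℂ, Polynomial.aeval z p = 0 → z.im = 0

open Polynomial Matrix ComplexConjugate

theorem algebraMap_dotProduct_mulVec_eq_sum_sq {K A : Type*} [CommSemiring K] [CommSemiring A]
    [Algebra K A] {d : ℕ} (R : Multiset A) (H : Matrix (Fin d) (Fin d) K)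
    (hH : ∀ i j : Fin d, algebraMap K A (H i j) = (R.map fun r => r ^ ((i : ℕ) + j)).sum)
    (x : Fin d → K) :
    algebraMap K A (x ⬝ᵥ H *ᵥ x) = (R.map fun r => (∑ i, x i • r ^ (i : ℕ)) ^ 2).sum := by
  have hsq (r : A) : (∑ i, x i • r ^ (i : ℕ)) ^ 2
      = ∑ i, ∑ j : Fin d, algebraMap K A (x i) * (r ^ ((i : ℕ) + j) * algebraMap K A (x j)) := by
    simp only [sq, Finset.sum_mul_sum, Algebra.smul_def, pow_add]
    exact Finset.sum_congr rfl fun i _ => Finset.sum_congr rfl fun j _ => by ring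
  simp only [hsq, Multiset.sum_map_sum, dotProduct, mulVec, map_sum, map_mul, Finset.mul_sum,
    hH, Multiset.sum_map_mul_left, Multiset.sum_map_mul_right]

theorem Complex.re_multiset_sum (s : Multiset ℂ) : s.sum.re = (s.map re).sum :=
  map_multiset_sum reAddGroupHom s

theorem Complex.exists_ofReal_mul_add_ofReal_eq {z : ℂ} (hz : z.im ≠ 0) (w : ℂ) :
    ∃ a b : ℝ, (b : ℂ) * z + a = w :=
  ⟨w.re - w.im / z.im * z.re, w.im / z.im,
    Complex.ext (by simp) (by simp [div_mul_cancel₀ _ hz])⟩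

theorem map_quadratic_eq_X_sub_C_conj_mul_X_sub_C (z : ℂ) :
    (X ^ 2 - C (2 * z.re) * X + C (‖z‖ ^ 2) : ℝ[X]).map (algebraMap ℝ ℂ)
      = (X - C (conj z)) * (X - C z) := by
  calc _ = X ^ 2 - C (↑(2 * z.re) : ℂ) * X + C (‖z‖ ^ 2 : ℂ) := by simp
    _ = (X - C (conj z)) * (X - C z) := by
      rw [← Complex.add_conj, map_add, ← Complex.mul_conj', map_mul]
      ring

theorem roots_map_quadratic (z : ℂ) :
    ((X ^ 2 - C (2 * z.re) * X + C (‖z‖ ^ 2) : ℝ[X]).map (algebraMap ℝ ℂ)).roots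
      = {conj z} + {z} := by
  rw [map_quadratic_eq_X_sub_C_conj_mul_X_sub_C, roots_mul (mul_ne_zero (X_sub_C_ne_zero _)
    (X_sub_C_ne_zero _)), roots_X_sub_C, roots_X_sub_C]

theorem exists_natDegree_lt_re_sum_sq_aeval_roots_neg {f : ℝ[X]} (hf : f ≠ 0) {z : ℂ}
    (hz : aeval z f = 0) (him : z.im ≠ 0) :
    ∃ p : ℝ[X], p.natDegree < f.natDegree ∧
      ((f.map (algebraMap ℝ ℂ)).roots.map fun r => aeval r p ^ 2).sum.re < 0 := by
  set g : ℝ[X] := X ^ 2 - C (2 * z.re) * X + C (‖z‖ ^ 2) with hg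
  have hg_monic : g.Monic := by rw [hg]; monicity!
  have hg_deg : g.natDegree = 2 := by rw [hg]; compute_degree!
  have hg_pos : 0 < g.degree := by
    rw [degree_eq_natDegree hg_monic.ne_zero, hg_deg]; norm_num
  obtain ⟨q, hfq, hgq⟩ :=
    (finiteMultiplicity_of_degree_pos_of_monic hg_pos hg_monic hf).exists_eq_pow_mul_and_not_dvd
  set k := multiplicity g f
  have hk : k ≠ 0 := by
    rintro hk
    rw [hk, pow_zero, one_mul] at hfq
    exact hgq (hfq ▸ quadratic_dvd_of_aeval_eq_zero_im_ne_zero f hz him)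
  have hq : q ≠ 0 := by rintro rfl; exact hf (by rw [hfq, mul_zero])
  have hqz : aeval z q ≠ 0 := fun h => hgq (quadratic_dvd_of_aeval_eq_zero_im_ne_zero q h him)
  obtain ⟨a, b, hab⟩ := Complex.exists_ofReal_mul_add_ofReal_eq him (Complex.I / aeval z q)
  set p := (C b * X + C a) * q
  refine ⟨p, ?_, ?_⟩
  · have hfdeg : f.natDegree = 2 * k + q.natDegree := by
      rw [hfq, natDegree_mul (pow_ne_zero _ hg_monic.ne_zero) hq, natDegree_pow, hg_deg, mul_comm]
    have hpdeg : p.natDegree ≤ 1 + q.natDegree :=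
      natDegree_mul_le.trans (Nat.add_le_add_right natDegree_linear_le _)
    lia
  have hpz : aeval z p = Complex.I := by
    simp [p, hab, div_mul_cancel₀ _ hqz]
  have hpz' : aeval (conj z) p = -Complex.I := by
    rw [aeval_conj, hpz, Complex.conj_I]
  have hroots : (f.map (algebraMap ℝ ℂ)).roots
      = k • ({conj z} + {z}) + (q.map (algebraMap ℝ ℂ)).roots := by
    have hfq' : (g ^ k).map (algebraMap ℝ ℂ) * q.map (algebraMap ℝ ℂ) ≠ 0 := by
      rw [← Polynomial.map_mul, ← hfq]; exact Polynomial.map_ne_zero hf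
    rw [hfq, Polynomial.map_mul, roots_mul hfq', Polynomial.map_pow, roots_pow,
      roots_map_quadratic]
  have hpq : ∀ r ∈ (q.map (algebraMap ℝ ℂ)).roots, aeval r p = 0 := by
    intro r hr
    rw [mem_roots_map hq, ← aeval_def] at hr
    simp [p, hr]
  have hzero : ((q.map (algebraMap ℝ ℂ)).roots.map fun r => aeval r p ^ 2).sum = 0 :=
    Multiset.sum_eq_zero fun w hw => by
      obtain ⟨r, hr, rfl⟩ := Multiset.mem_map.mp hw
      rw [hpq r hr, zero_pow two_ne_zero]
  rw [hroots, Multiset.map_add, Multiset.sum_add, hzero, Multiset.map_nsmul, Multiset.sum_nsmul]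
  simp [hpz, hpz', Nat.pos_of_ne_zero hk]

theorem re_sum_sq_sum_smul_pow_nonneg {d : ℕ} {R : Multiset ℂ} (hR : ∀ r ∈ R, r.im = 0)
    (x : Fin d → ℝ) : 0 ≤ (R.map fun r => (∑ i, x i • r ^ (i : ℕ)) ^ 2).sum.re := by
  rw [Complex.re_multiset_sum, Multiset.map_map]
  refine Multiset.sum_nonneg fun t ht => ?_
  obtain ⟨r, hr, rfl⟩ := Multiset.mem_map.mp ht
  obtain ⟨s, rfl⟩ : ∃ s : ℝ, (s : ℂ) = r := ⟨r.re, Complex.ext rfl (hR r hr).symm⟩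
  have hs : ∑ i, x i • (s : ℂ) ^ (i : ℕ) = ((∑ i, x i * s ^ (i : ℕ) : ℝ) : ℂ) := by
    push_cast; simp only [Complex.real_smul]
  rw [Function.comp_apply, hs, ← Complex.ofReal_pow, Complex.ofReal_re]
  positivity

theorem hermite_posSemidef_iff_realRooted_general (d : ℕ)
    (f : Polynomial ℝ) (hmonic : f.Monic) (hdeg : f.natDegree = d)
    (H : Matrix (Fin d) (Fin d) ℝ)
    (hH : ∀ i j : Fin d,
      (H i j : ℂ) =
        (((f.map (algebraMap ℝ ℂ)).roots.map (fun r => r ^ ((i : ℕ) + (j : ℕ)))).sum)) :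
    RealRooted f ↔ H.PosSemidef := by
  have hf : f ≠ 0 := hmonic.ne_zero
  have hquad (x : Fin d → ℝ) := algebraMap_dotProduct_mulVec_eq_sum_sq _ H hH x
  have hherm : H.IsHermitian := IsHermitian.ext fun i j => by
    exact_mod_cast (hH j i).trans (add_comm (j : ℕ) i ▸ hH i j).symm
  rw [posSemidef_iff_dotProduct_mulVec]
  constructor
  · refine fun hreal => ⟨hherm, fun x => ?_⟩
    have hroots_real : ∀ r ∈ (f.map (algebraMap ℝ ℂ)).roots, r.im = 0 := fun r hr =>
      hreal r (by rwa [mem_roots_map hf, ← aeval_def] at hr)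
    have hnonneg := re_sum_sq_sum_smul_pow_nonneg hroots_real x
    rwa [← hquad, Complex.coe_algebraMap, Complex.ofReal_re, ← star_trivial x] at hnonneg
  · rintro ⟨-, hpsd⟩ z hz
    by_contra him
    obtain ⟨p, hpd, hneg⟩ := exists_natDegree_lt_re_sum_sq_aeval_roots_neg hf hz him
    have heval (r : ℂ) : ∑ i : Fin d, p.coeff i • r ^ (i : ℕ) = aeval r p := by
      rw [aeval_eq_sum_range' (hdeg ▸ hpd), Fin.sum_univ_eq_sum_range (fun i => p.coeff i • r ^ i)]
    have hnonneg := hpsd fun i => p.coeff i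
    rw [star_trivial, ← Complex.ofReal_re (_ ⬝ᵥ _), ← Complex.coe_algebraMap, hquad] at hnonneg
    simp only [heval] at hnonneg
    linarith

/-- A monic real polynomial of degree `d` is real-rooted if and only if its Hermite
matrix (the `d × d` real symmetric matrix whose `(i,j)` entry is the `(i+j)`-th power sum
of the complex roots of `f`, indexing from `0`) is positive semidefinite. -/
theorem hermite_posSemidef_iff_realRooted (d : ℕ) (hd : 0 < d)
    (f : Polynomial ℝ) (hmonic : f.Monic) (hdeg : f.natDegree = d)
    (H : Matrix (Fin d) (Fin d) ℝ)
    (hH : ∀ i j : Fin d,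
      (H i j : ℂ) =
        (((f.map (algebraMap ℝ ℂ)).roots.map (fun r => r ^ ((i : ℕ) + (j : ℕ)))).sum)) :
    RealRooted f ↔ H.PosSemidef :=
  hermite_posSemidef_iff_realRooted_general d f hmonic hdeg H hH
end

section
/- For a monic real polynomial f of degree d, the number of distinct complex roots of f equals the rank of its Hermite matrix H(f). -/
/-!
Over `ℂ`, let `x₁, …, xₜ` be the distinct roots of `f` and `mₖ` their multiplicities. Then
`H = Wᵀ · diag(mₖ) · W` with `W` the `t × d` Vandermonde matrix `(xₖ ^ j)`, so `rank H ≤ t`;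
since `t ≤ d`, the leading `t × t` block of `H` is `Vᵀ · diag(mₖ) · V` for the square Vandermonde
matrix `V` of distinct nodes, which is invertible, so `rank H ≥ t`. Finally the rank of a real
matrix does not change when it is viewed over `ℂ`.
-/

open Matrix Polynomial

namespace Matrix

variable {K L : Type*} [Field K] [Field L]

theorem rank_map_diagonal {m : Type*} [Fintype m] [DecidableEq m] (f : K →+* L) (w : m → K) :
    ((diagonal w).map f).rank = (diagonal w).rank := by
  classical
  rw [diagonal_map (map_zero f), rank_diagonal, rank_diagonal]
  simp only [_root_.map_ne_zero]

-- Both ranks are read off the normal form `V * A * U` (a reindexed `diagonal (1 ⊕ᵥ 0)`), which `f` preserves.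
theorem rank_map_ringHom {m : Type*} [Fintype m] [DecidableEq m] (f : K →+* L)
    (A : Matrix m m K) : (A.map f).rank = A.rank := by
  obtain ⟨V, U, e, hV, hU, hVAU⟩ := A.exists_rank_normal_form
  have hV' := hV.map f.mapMatrix
  have hU' := hU.map f.mapMatrix
  rw [isUnit_iff_isUnit_det] at hV hU hV' hU'
  have hN : fromBlocks (1 : Matrix (Fin A.rank) (Fin A.rank) K) 0 0
      (0 : Matrix (Fin (Fintype.card m - A.rank)) (Fin (Fintype.card m - A.rank)) K) =
      diagonal (1 ⊕ᵥ 0) := by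
    simp [← fromBlocks_diagonal]
  rw [hN] at hVAU
  calc (A.map f).rank = (f.mapMatrix V * A.map f * f.mapMatrix U).rank := by
        rw [rank_mul_eq_left_of_isUnit_det _ _ hU', rank_mul_eq_right_of_isUnit_det _ _ hV']
    _ = (V * A * U).rank := by
        rw [← RingHom.mapMatrix_apply, ← map_mul, ← map_mul, RingHom.mapMatrix_apply, hVAU,
          ← submatrix_map, rank_submatrix, rank_submatrix, rank_map_diagonal]
    _ = A.rank := by
        rw [rank_mul_eq_left_of_isUnit_det _ _ hU, rank_mul_eq_right_of_isUnit_det _ _ hV]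

theorem rectVandermonde_submatrix_castLE {t d : ℕ} (h : t ≤ d) (v : Fin t → K) :
    (rectVandermonde v 1 d).submatrix id (Fin.castLE h) = vandermonde v := by
  ext k j
  simp [rectVandermonde_apply, vandermonde_apply]

theorem rank_rectVandermonde_transpose_mul_diagonal_mul {t d : ℕ} (h : t ≤ d) {v : Fin t → K}
    (hv : Function.Injective v) {w : Fin t → K} (hw : ∀ k, w k ≠ 0) :
    ((rectVandermonde v 1 d)ᵀ * diagonal w * rectVandermonde v 1 d).rank = t := by
  set W := rectVandermonde v 1 d
  apply le_antisymm
  · calc (Wᵀ * diagonal w * W).rank ≤ (Wᵀ * diagonal w).rank := rank_mul_le_left _ _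
      _ ≤ t := rank_le_width _
  · have hsub : (Wᵀ * diagonal w * W).submatrix (Fin.castLE h) (Fin.castLE h) =
        (vandermonde v)ᵀ * diagonal w * vandermonde v := by
      rw [submatrix_mul _ _ _ id _ Function.bijective_id,
        submatrix_mul _ _ _ id _ Function.bijective_id, submatrix_id_id, ← transpose_submatrix,
        rectVandermonde_submatrix_castLE]
    have hdet : ((vandermonde v)ᵀ * diagonal w * vandermonde v).det ≠ 0 := by
      rw [det_mul, det_mul, det_transpose, det_diagonal]
      exact mul_ne_zero (mul_ne_zero (det_vandermonde_ne_zero_iff.mpr hv)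
        (Finset.prod_ne_zero_iff.mpr fun k _ ↦ hw k)) (det_vandermonde_ne_zero_iff.mpr hv)
    calc t = ((vandermonde v)ᵀ * diagonal w * vandermonde v).rank := by
          rw [rank_of_det_ne_zero hdet, Fintype.card_fin]
      _ ≤ (Wᵀ * diagonal w * W).rank := hsub ▸ rank_submatrix_le _ _ _

end Matrix

namespace Multiset

variable {K : Type*} [Field K]

def powerSumHankel (R : Multiset K) (d : ℕ) : Matrix (Fin d) (Fin d) K :=
  of fun i j ↦ (R.map fun r ↦ r ^ ((i : ℕ) + (j : ℕ))).sum

theorem rank_powerSumHankel [CharZero K] [DecidableEq K] {R : Multiset K} {d : ℕ}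
    (h : R.toFinset.card ≤ d) : (R.powerSumHankel d).rank = R.toFinset.card := by
  set e := R.toFinset.equivFin.symm
  set v : Fin R.toFinset.card → K := fun k ↦ e k
  have hv : Function.Injective v := Subtype.val_injective.comp e.injective
  have hfact : R.powerSumHankel d =
      (rectVandermonde v 1 d)ᵀ * diagonal (fun k ↦ (R.count (v k) : K)) *
        rectVandermonde v 1 d := by
    ext i j
    rw [powerSumHankel, of_apply, Finset.sum_multiset_map_count, ← Finset.sum_coe_sort,
      ← e.sum_comp, mul_apply]
    refine Finset.sum_congr rfl fun k _ ↦ ?_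
    simp only [nsmul_eq_mul, mul_diagonal, transpose_apply, rectVandermonde_apply, Pi.one_apply,
      one_pow, mul_one, v, pow_add]
    ring
  rw [hfact, rank_rectVandermonde_transpose_mul_diagonal_mul h hv]
  intro k
  exact Nat.cast_ne_zero.mpr (count_ne_zero.mpr (mem_toFinset.mp (e k).2))

end Multiset

theorem hermite_rank_eq_card_distinct_roots_general (d : ℕ)
    (f : Polynomial ℝ) (hdeg : f.natDegree = d)
    (H : Matrix (Fin d) (Fin d) ℝ)
    (hH : ∀ i j : Fin d,
      (H i j : ℂ) =
        (((f.map (algebraMap ℝ ℂ)).roots.map (fun r => r ^ ((i : ℕ) + (j : ℕ)))).sum)) :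
    (f.map (algebraMap ℝ ℂ)).roots.toFinset.card = H.rank := by
  set R := (f.map (algebraMap ℝ ℂ)).roots
  have hcard : R.toFinset.card ≤ d := calc
    R.toFinset.card ≤ Multiset.card R := Multiset.toFinset_card_le R
    _ ≤ (f.map (algebraMap ℝ ℂ)).natDegree := card_roots' _
    _ = d := by rw [natDegree_map, hdeg]
  have hHR : H.map (algebraMap ℝ ℂ) = R.powerSumHankel d := by
    ext i j
    exact hH i j
  rw [← rank_map_ringHom (algebraMap ℝ ℂ) H, hHR, Multiset.rank_powerSumHankel hcard]

/-- For a monic real polynomial `f` of degree `d`, the number of distinct complex roots of `f`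
equals the rank of its Hermite matrix, the `d × d` real symmetric matrix whose `(i,j)` entry
is the `(i+j)`-th power sum of the complex roots of `f` (indexing from `0`). -/
theorem hermite_rank_eq_card_distinct_roots (d : ℕ) (hd : 0 < d)
    (f : Polynomial ℝ) (hmonic : f.Monic) (hdeg : f.natDegree = d)
    (H : Matrix (Fin d) (Fin d) ℝ)
    (hH : ∀ i j : Fin d,
      (H i j : ℂ) =
        (((f.map (algebraMap ℝ ℂ)).roots.map (fun r => r ^ ((i : ℕ) + (j : ℕ)))).sum)) :
    (f.map (algebraMap ℝ ℂ)).roots.toFinset.card = H.rank :=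
  hermite_rank_eq_card_distinct_roots_general d f hdeg H hH
end

section
/- Let f = Σ_{j=0}^d c_j t^j be a univariate polynomial of degree d with real coefficients, and substitute t = t_1 + i t_2 to write f = f_re(t_1,t_2) + i f_im(t_1,t_2) with f_re, f_im ∈ ℝ[t_1,t_2]. Then the resultant Res_{t_1}(f_re, f_im), taken with respect to t_1, is divisible by t_2^d in ℝ[t_2]. -/
/-- The Sylvester matrix of two polynomials `p`, `q`, regarded as having degrees `m` and `n`
respectively. Its determinant is the resultant of `p` and `q`. -/
def sylvester {R : Type*} [CommRing R] (p q : Polynomial R) (m n : ℕ) :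
    Matrix (Fin (m + n)) (Fin (m + n)) R :=
  Matrix.of fun i j =>
    if (j : ℕ) < n then
      (if (j : ℕ) ≤ (i : ℕ) ∧ (i : ℕ) ≤ m + (j : ℕ) then p.coeff (m + (j : ℕ) - (i : ℕ)) else 0)
    else
      (if (j : ℕ) - n ≤ (i : ℕ) ∧ (i : ℕ) ≤ n + ((j : ℕ) - n) then
        q.coeff (n + ((j : ℕ) - n) - (i : ℕ)) else 0)

/-!
On the real axis `t₂ = 0` the value `f(t₁)` is real, so `f_im(t₁, 0) = 0` and `t₂` divides every
coefficient of `f_im`. These coefficients fill the last `d` columns of the Sylvester matrix, and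
`t₂` can be factored out of each of those columns.
-/

open Finset

namespace Matrix

variable {n R : Type*} [Fintype n] [DecidableEq n] [CommRing R]

theorem prod_dvd_det_of_forall_dvd_col (M : Matrix n n R) (c : n → R)
    (h : ∀ i j, c j ∣ M i j) : ∏ j, c j ∣ M.det := by
  choose N hN using h
  have hM : M = of N * diagonal c := by
    ext i j
    rw [mul_diagonal, of_apply, hN, mul_comm]
  rw [hM, det_mul, det_diagonal]
  exact dvd_mul_left _ _

theorem pow_card_dvd_det_of_forall_dvd_col (M : Matrix n n R) (s : Finset n) (a : R)
    (h : ∀ i, ∀ j ∈ s, a ∣ M i j) : a ^ #s ∣ M.det := by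
  have hprod : ∏ j, (if j ∈ s then a else 1) = a ^ #s := by
    rw [prod_ite_mem, univ_inter, prod_const]
  rw [← hprod]
  refine prod_dvd_det_of_forall_dvd_col M _ fun i j => ?_
  split_ifs with hj
  · exact h i j hj
  · exact one_dvd _

end Matrix

theorem Fin.card_filter_not_val_lt (m n : ℕ) : #{j : Fin (m + n) | ¬ (j : ℕ) < n} = m := by
  rw [filter_not, card_sdiff_of_subset (filter_subset _ _), Fin.card_filter_val_lt]
  simp

theorem dvd_sylvester_apply_of_not_lt {R : Type*} [CommRing R] (p q : Polynomial R) (m n : ℕ)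
    (a : R) (hq : ∀ k, a ∣ q.coeff k) (i j : Fin (m + n)) (hj : ¬ (j : ℕ) < n) :
    a ∣ sylvester p q m n i j := by
  simp only [sylvester, Matrix.of_apply, if_neg hj]
  split_ifs
  exacts [hq _, dvd_zero a]

namespace Polynomial

theorem X_dvd_coeff_of_map_evalRingHom_zero {R : Type*} [CommRing R] {p : R[X][X]}
    (hp : p.map (evalRingHom 0) = 0) (k : ℕ) : X ∣ p.coeff k := by
  rw [X_dvd_iff, coeff_zero_eq_eval_zero, ← coe_evalRingHom, ← coeff_map, hp, coeff_zero]

theorem eq_zero_of_eval_ofReal_eq_add_mul_I {f g h : ℝ[X]}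
    (hf : ∀ x : ℝ, (f.map (algebraMap ℝ ℂ)).eval (x : ℂ)
      = ((g.eval x : ℝ) : ℂ) + ((h.eval x : ℝ) : ℂ) * Complex.I) :
    h = 0 := by
  refine Polynomial.funext fun x => ?_
  have him := congrArg Complex.im (hf x)
  rw [← Complex.coe_algebraMap, eval_map_algebraMap, aeval_algebraMap_apply,
    Complex.coe_algebraMap] at him
  simpa using him.symm

end Polynomial

theorem t2_pow_degree_dvd_resultant_general (d : ℕ) (f : Polynomial ℝ)
    (fre fim : Polynomial (Polynomial ℝ))
    (hdecomp : ∀ s₁ s₂ : ℝ,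
      (f.map (algebraMap ℝ ℂ)).eval ((s₁ : ℂ) + (s₂ : ℂ) * Complex.I)
        = (((fre.map (Polynomial.evalRingHom s₂)).eval s₁ : ℝ) : ℂ)
          + (((fim.map (Polynomial.evalRingHom s₂)).eval s₁ : ℝ) : ℂ) * Complex.I) :
    (Polynomial.X : Polynomial ℝ) ^ d ∣ (sylvester fre fim d (d - 1)).det := by
  have him_real_axis : fim.map (Polynomial.evalRingHom 0) = 0 :=
    Polynomial.eq_zero_of_eval_ofReal_eq_add_mul_I fun x => by
      simpa only [Complex.ofReal_zero, zero_mul, add_zero] using hdecomp x 0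
  have hcols := Matrix.pow_card_dvd_det_of_forall_dvd_col (sylvester fre fim d (d - 1))
    {j | ¬ (j : ℕ) < d - 1} Polynomial.X fun i j hj =>
      dvd_sylvester_apply_of_not_lt fre fim d (d - 1) _
        (Polynomial.X_dvd_coeff_of_map_evalRingHom_zero him_real_axis) i j (mem_filter.mp hj).2
  rwa [Fin.card_filter_not_val_lt] at hcols

/-- Let `f` be a real univariate polynomial of degree `d`, and write
`f(t₁ + i t₂) = f_re(t₁,t₂) + i f_im(t₁,t₂)` with `f_re, f_im` real polynomials in `t₁`
over `ℝ[t₂]`. Then the resultant of `f_re` and `f_im` with respect to `t₁` (the determinant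
of the `(2d-1) × (2d-1)` Sylvester matrix, `f_re` having degree `d` and `f_im` degree `d-1`
in `t₁`) is divisible by `t₂^d` in `ℝ[t₂]`. -/
theorem t2_pow_degree_dvd_resultant (d : ℕ) (hd : 0 < d)
    (f : Polynomial ℝ) (hdeg : f.natDegree = d)
    (fre fim : Polynomial (Polynomial ℝ))
    (hdecomp : ∀ s₁ s₂ : ℝ,
      (f.map (algebraMap ℝ ℂ)).eval ((s₁ : ℂ) + (s₂ : ℂ) * Complex.I)
        = (((fre.map (Polynomial.evalRingHom s₂)).eval s₁ : ℝ) : ℂ)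
          + (((fim.map (Polynomial.evalRingHom s₂)).eval s₁ : ℝ) : ℂ) * Complex.I) :
    (Polynomial.X : Polynomial ℝ) ^ d ∣ (sylvester fre fim d (d - 1)).det :=
  t2_pow_degree_dvd_resultant_general d f fre fim hdecomp
end

section
/- Let F ∈ ℝ[x_0,...,x_n] be a form of degree d with F(e) = 1 for e = (1,0,...,0), and write Res_{t_1}(f_re, f_im) = t_2^p · R_F where R_F is not divisible by t_2 (p ≥ d). If R_F(s, a) ≠ 0 for every real point (s, a) ∈ ℝ × ℝ^n with s ≠ 0, then F is hyperbolic with respect to e. -/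
open MvPolynomial

/-- Hyperbolicity of a form with respect to a point. -/
def Hyperbolic {n : ℕ} (F : MvPolynomial (Fin (n + 1)) ℝ) (e : Fin (n + 1) → ℝ) : Prop :=
  MvPolynomial.eval e F ≠ 0 ∧
    ∀ a : Fin (n + 1) → ℝ,
      RealRooted
        (MvPolynomial.aeval
          (fun i => Polynomial.C (e i) * Polynomial.X - Polynomial.C (a i)) F)

/-!
A non-real root of `t ↦ F(t e - a)` is a point `F(s₁ + i s₂, x) = 0` with `s₂ ≠ 0`, so the
specialisations of `f_re` and `f_im` at `(s₂, x)` share the real root `s₁`. Since `F` is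
homogeneous, `t ↦ F(t + i s₂, x)` has degree at most `d` and top coefficient `F(e) ∈ ℝ`, so these
specialisations have degrees at most `d` and `d - 1`; their resultant therefore vanishes. But it
is the specialisation of `Res_{t₁}(f_re, f_im) = t₂^p R_F`, which is nonzero at `(s₂, x)`.
-/
open scoped Polynomial

namespace Polynomial

lemma coeff_prod_sum_of_natDegree_le {R ι : Type*} [CommSemiring R] (s : Finset ι)
    (f : ι → R[X]) (n : ι → ℕ) (h : ∀ i ∈ s, (f i).natDegree ≤ n i) :
    (∏ i ∈ s, f i).coeff (∑ i ∈ s, n i) = ∏ i ∈ s, (f i).coeff (n i) := by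
  classical
  induction s using Finset.induction_on with
  | empty => simp
  | insert a s ha ih =>
    have hs : ∀ i ∈ s, (f i).natDegree ≤ n i := fun i hi => h i (s.mem_insert_of_mem hi)
    rw [Finset.prod_insert ha, Finset.sum_insert ha, Finset.prod_insert ha,
      coeff_mul_add_eq_of_natDegree_le (h a (s.mem_insert_self a)), ih hs]
    exact (natDegree_prod_le _ _).trans (Finset.sum_le_sum hs)

variable {σ S : Type*} [CommSemiring S]

lemma natDegree_linear_pow_le (a b : S) (k : ℕ) : ((C a * X + C b) ^ k).natDegree ≤ k := by
  simpa using natDegree_pow_le_of_le k natDegree_linear_le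

lemma natDegree_prod_linear_pow_le (e v : σ → S) (b : σ →₀ ℕ) :
    (∏ i ∈ b.support, (C (e i) * X + C (v i)) ^ b i).natDegree ≤ ∑ i ∈ b.support, b i :=
  (natDegree_prod_le _ _).trans
    (Finset.sum_le_sum fun i _ => natDegree_linear_pow_le (e i) (v i) (b i))

lemma coeff_prod_linear_pow (e v : σ → S) (b : σ →₀ ℕ) :
    (∏ i ∈ b.support, (C (e i) * X + C (v i)) ^ b i).coeff (∑ i ∈ b.support, b i)
      = ∏ i ∈ b.support, e i ^ b i := by
  rw [coeff_prod_sum_of_natDegree_le _ _ _ fun i _ => natDegree_linear_pow_le (e i) (v i) (b i)]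
  refine Finset.prod_congr rfl fun i _ => ?_
  simpa using coeff_pow_of_natDegree_le (m := b i) (natDegree_linear_le (a := e i) (b := v i))

end Polynomial

namespace MvPolynomial.IsHomogeneous

variable {σ R S : Type*} [CommSemiring R] [CommSemiring S] [Algebra R S]
  {F : MvPolynomial σ R} {d : ℕ}

theorem natDegree_aeval_linear_le (hF : F.IsHomogeneous d) (e v : σ → S) :
    (MvPolynomial.aeval (fun i => Polynomial.C (e i) * Polynomial.X + Polynomial.C (v i))
      F).natDegree ≤ d := by
  rw [aeval_def, eval₂_eq]
  refine Polynomial.natDegree_sum_le_of_forall_le _ _ fun b hb => ?_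
  rw [Polynomial.algebraMap_apply, hF.degree_eq_sum_deg_support hb]
  exact (Polynomial.natDegree_C_mul_le _ _).trans (Polynomial.natDegree_prod_linear_pow_le e v b)

theorem coeff_aeval_linear (hF : F.IsHomogeneous d) (e v : σ → S) :
    (MvPolynomial.aeval (fun i => Polynomial.C (e i) * Polynomial.X + Polynomial.C (v i))
      F).coeff d = MvPolynomial.aeval e F := by
  rw [aeval_def, eval₂_eq, aeval_def, eval₂_eq, Polynomial.finsetSum_coeff]
  refine Finset.sum_congr rfl fun b hb => ?_
  rw [Polynomial.algebraMap_apply, Polynomial.coeff_C_mul, hF.degree_eq_sum_deg_support hb,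
    Polynomial.coeff_prod_linear_pow]

end MvPolynomial.IsHomogeneous

theorem MvPolynomial.polynomial_eval_aeval {σ R S : Type*} [CommSemiring R] [CommSemiring S]
    [Algebra R S] (g : σ → S[X]) (F : MvPolynomial σ R) (x : S) :
    (aeval g F).eval x = aeval (fun i => (g i).eval x) F :=
  comp_aeval_apply g ((Polynomial.aeval x).restrictScalars R) F

namespace Polynomial

open Complex

lemma coeff_eq_of_eval_ofReal {h : ℂ[X]} {u w : ℝ[X]}
    (H : ∀ t : ℝ, h.eval (t : ℂ) = u.eval t + w.eval t * I) (k : ℕ) :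
    h.coeff k = u.coeff k + w.coeff k * I := by
  have : h = u.map ofRealHom + w.map ofRealHom * C I := by
    refine eq_of_infinite_eval_eq _ _ ((Set.infinite_range_of_injective ofReal_injective).mono ?_)
    rintro _ ⟨t, rfl⟩
    simpa [eval_map, ← ofRealHom_eq_coe, eval₂_at_apply] using H t
  rw [this]
  simp

lemma natDegree_le_of_eval_ofReal {h : ℂ[X]} {u w : ℝ[X]}
    (H : ∀ t : ℝ, h.eval (t : ℂ) = u.eval t + w.eval t * I) {d : ℕ} (hh : h.natDegree ≤ d)
    (hd : (h.coeff d).im = 0) : u.natDegree ≤ d ∧ w.natDegree ≤ d - 1 := by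
  have hu : ∀ k, u.coeff k = (h.coeff k).re := fun k => by simp [coeff_eq_of_eval_ofReal H]
  have hw : ∀ k, w.coeff k = (h.coeff k).im := fun k => by simp [coeff_eq_of_eval_ofReal H]
  refine ⟨natDegree_le_iff_coeff_eq_zero.mpr fun k hk => ?_,
    natDegree_le_iff_coeff_eq_zero.mpr fun k hk => ?_⟩
  · simp [hu, coeff_eq_zero_of_natDegree_lt (hh.trans_lt hk)]
  · obtain rfl | hk := (show d ≤ k by omega).eq_or_lt
    · rw [hw, hd]
    · simp [hw, coeff_eq_zero_of_natDegree_lt (hh.trans_lt hk)]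

end Polynomial

lemma sylvester_submatrix_rev {R : Type*} [CommRing R] (p q : R[X]) (m n : ℕ) :
    (sylvester p q m n).submatrix Fin.rev Fin.rev = Polynomial.sylvester p q m n := by
  ext i j
  have hi := i.isLt
  induction j using Fin.addCases with
  | left j =>
    have hj := j.isLt
    simp only [sylvester, Polynomial.sylvester, Matrix.submatrix_apply, Matrix.of_apply,
      Fin.addCases_left, Fin.val_rev, Fin.val_castAdd, Set.mem_Icc]
    split_ifs <;> first | rfl | omega | (congr 1; omega)
  | right j =>
    have hj := j.isLt
    simp only [sylvester, Polynomial.sylvester, Matrix.submatrix_apply, Matrix.of_apply,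
      Fin.addCases_right, Fin.val_rev, Fin.val_natAdd, Set.mem_Icc]
    split_ifs <;> first | rfl | omega | (congr 1; omega)

lemma det_sylvester {R : Type*} [CommRing R] (p q : R[X]) (m n : ℕ) :
    (sylvester p q m n).det = p.resultant q m n := by
  rw [Polynomial.resultant, ← sylvester_submatrix_rev]
  exact (Matrix.det_submatrix_equiv_self Fin.revPerm _).symm

namespace Polynomial

lemma resultant_eq_zero_of_isRoot {R : Type*} [CommRing R] {p q : R[X]} {m n : ℕ}
    (hp : p.natDegree ≤ m) (hq : q.natDegree ≤ n) (hmn : m ≠ 0 ∨ n ≠ 0) {a : R}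
    (hpa : p.IsRoot a) (hqa : q.IsRoot a) : p.resultant q m n = 0 := by
  obtain ⟨u, w, -, -, h⟩ := exists_mul_add_mul_eq_C_resultant p q hp hq hmn
  simpa [hpa.eq_zero, hqa.eq_zero] using congrArg (eval a) h.symm

end Polynomial

def IsReImDecomposition {n : ℕ} (F : MvPolynomial (Fin (n + 1)) ℝ)
    (fre fim : Polynomial (MvPolynomial (Fin (n + 1)) ℝ)) : Prop :=
  ∀ (s₁ s₂ : ℝ) (a : Fin n → ℝ),
    MvPolynomial.aeval (Fin.cons ((s₁ : ℂ) + (s₂ : ℂ) * Complex.I) (fun i => (a i : ℂ))) F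
      = (((fre.map (MvPolynomial.eval (Fin.cons s₂ a))).eval s₁ : ℝ) : ℂ)
        + (((fim.map (MvPolynomial.eval (Fin.cons s₂ a))).eval s₁ : ℝ) : ℂ) * Complex.I

namespace IsReImDecomposition

open Polynomial Complex

variable {n : ℕ} {F : MvPolynomial (Fin (n + 1)) ℝ} {fre fim : (MvPolynomial (Fin (n + 1)) ℝ)[X]}

lemma isRoot_of_aeval_eq_zero (hdec : IsReImDecomposition F fre fim) {s₁ s₂ : ℝ}
    {a : Fin n → ℝ}
    (h : MvPolynomial.aeval (Fin.cons ((s₁ : ℂ) + (s₂ : ℂ) * I) (fun i => (a i : ℂ))) F = 0) :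
    (fre.map (MvPolynomial.eval (Fin.cons s₂ a))).IsRoot s₁ ∧
      (fim.map (MvPolynomial.eval (Fin.cons s₂ a))).IsRoot s₁ := by
  have := hdec s₁ s₂ a
  rw [h, Complex.ext_iff] at this
  simpa [eq_comm] using this

lemma natDegree_map_eval_le (hdec : IsReImDecomposition F fre fim) {d : ℕ}
    (hF : F.IsHomogeneous d) (s₂ : ℝ) (a : Fin n → ℝ) :
    (fre.map (MvPolynomial.eval (Fin.cons s₂ a))).natDegree ≤ d ∧
      (fim.map (MvPolynomial.eval (Fin.cons s₂ a))).natDegree ≤ d - 1 := by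
  set e : Fin (n + 1) → ℂ := fun i => ((Pi.single 0 1 : Fin (n + 1) → ℝ) i : ℂ)
  set v : Fin (n + 1) → ℂ := Fin.cons ((s₂ : ℂ) * I) (fun i => (a i : ℂ))
  refine natDegree_le_of_eval_ofReal (fun t => ?_) (hF.natDegree_aeval_linear_le e v) ?_
  · rw [MvPolynomial.polynomial_eval_aeval, ← hdec]
    congr 2
    funext i
    cases i using Fin.cases <;> simp [e, v]
  · rw [hF.coeff_aeval_linear, show e = algebraMap ℝ ℂ ∘ Pi.single 0 1 from rfl,
      MvPolynomial.aeval_algebraMap_apply]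
    simp

end IsReImDecomposition

theorem hyperbolic_of_RF_nonvanishing_general {n d : ℕ} (hd : 0 < d)
    (F : MvPolynomial (Fin (n + 1)) ℝ) (hhom : F.IsHomogeneous d)
    (e : Fin (n + 1) → ℝ) (he : e = fun i => if i = 0 then 1 else 0)
    (hF : MvPolynomial.eval e F = 1)
    (fre fim : Polynomial (MvPolynomial (Fin (n + 1)) ℝ))
    (hdecomp : ∀ (s₁ s₂ : ℝ) (a : Fin n → ℝ),
      MvPolynomial.aeval
          (Fin.cons ((s₁ : ℂ) + (s₂ : ℂ) * Complex.I) (fun i => (a i : ℂ))) F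
        = (((fre.map (MvPolynomial.eval (Fin.cons s₂ a))).eval s₁ : ℝ) : ℂ)
          + (((fim.map (MvPolynomial.eval (Fin.cons s₂ a))).eval s₁ : ℝ) : ℂ) * Complex.I)
    (p : ℕ) (RF : MvPolynomial (Fin (n + 1)) ℝ)
    (hfact : (sylvester fre fim d (d - 1)).det = (MvPolynomial.X 0) ^ p * RF)
    (hnonzero : ∀ (s : ℝ) (a : Fin n → ℝ), s ≠ 0 →
      MvPolynomial.eval (Fin.cons s a) RF ≠ 0) :
    Hyperbolic F e := by
  subst he
  refine ⟨by simp [hF], fun a z hz => ?_⟩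
  by_contra hzim
  set x : Fin n → ℝ := fun i => -a i.succ
  have hpt : (fun i => Polynomial.aeval z
      (Polynomial.C (if i = 0 then (1 : ℝ) else 0) * Polynomial.X - Polynomial.C (a i)))
      = Fin.cons (((z.re - a 0 : ℝ) : ℂ) + (z.im : ℂ) * Complex.I) (fun i => (x i : ℂ)) := by
    funext i
    cases i using Fin.cases <;> simp [x, Complex.ext_iff]
  rw [MvPolynomial.comp_aeval_apply, hpt] at hz
  obtain ⟨hroot_re, hroot_im⟩ := IsReImDecomposition.isRoot_of_aeval_eq_zero hdecomp hz
  obtain ⟨hdeg_re, hdeg_im⟩ := IsReImDecomposition.natDegree_map_eval_le hdecomp hhom z.im x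
  have hres := Polynomial.resultant_eq_zero_of_isRoot hdeg_re hdeg_im (Or.inl hd.ne')
    hroot_re hroot_im
  rw [Polynomial.resultant_map_map, ← det_sylvester, hfact] at hres
  simp only [map_mul, map_pow, MvPolynomial.eval_X, Fin.cons_zero, mul_eq_zero] at hres
  exact hnonzero z.im x hzim (hres.resolve_left (pow_ne_zero p hzim))

/-- Let `F` be a form of degree `d` with `F(e) = 1`, `e = (1,0,…,0)`. Setting
`f_x(t) = F(t,x)` and decomposing `f_x(t₁+it₂) = f_re + i f_im`, write
`Res_{t₁}(f_re, f_im) = t₂^p ⬝ R_F` with `t₂ ∤ R_F` and `p ≥ d`. Here `f_re, f_im` are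
polynomials in `t₁` over `ℝ[t₂, x₁, …, xₙ]` (variable `0` of the coefficient ring is `t₂`).
If `R_F(s,a) ≠ 0` for every real point `(s,a)` with `s ≠ 0`, then `F` is hyperbolic
with respect to `e`. -/
theorem hyperbolic_of_RF_nonvanishing {n d : ℕ} (hd : 0 < d)
    (F : MvPolynomial (Fin (n + 1)) ℝ) (hhom : F.IsHomogeneous d)
    (e : Fin (n + 1) → ℝ) (he : e = fun i => if i = 0 then 1 else 0)
    (hF : MvPolynomial.eval e F = 1)
    (fre fim : Polynomial (MvPolynomial (Fin (n + 1)) ℝ))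
    (hdecomp : ∀ (s₁ s₂ : ℝ) (a : Fin n → ℝ),
      MvPolynomial.aeval
          (Fin.cons ((s₁ : ℂ) + (s₂ : ℂ) * Complex.I) (fun i => (a i : ℂ))) F
        = (((fre.map (MvPolynomial.eval (Fin.cons s₂ a))).eval s₁ : ℝ) : ℂ)
          + (((fim.map (MvPolynomial.eval (Fin.cons s₂ a))).eval s₁ : ℝ) : ℂ) * Complex.I)
    (p : ℕ) (hp : d ≤ p) (RF : MvPolynomial (Fin (n + 1)) ℝ)
    (hfact : (sylvester fre fim d (d - 1)).det = (MvPolynomial.X 0) ^ p * RF)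
    (hndvd : ¬ (MvPolynomial.X 0 : MvPolynomial (Fin (n + 1)) ℝ) ∣ RF)
    (hnonzero : ∀ (s : ℝ) (a : Fin n → ℝ), s ≠ 0 →
      MvPolynomial.eval (Fin.cons s a) RF ≠ 0) :
    Hyperbolic F e :=
  hyperbolic_of_RF_nonvanishing_general hd F hhom e he hF fre fim hdecomp p RF hfact hnonzero
end

section
/- Let F ∈ ℝ[x_0,...,x_n] be a form of degree d with F(e) = 1, hyperbolic with respect to e = (1,0,...,0). Write Res_{t_1}(f_re, f_im) = t_2^p · R_F with t_2 not dividing R_F. Then R_F has constant sign on ℝ^{n+1}: it is everywhere nonnegative or everywhere nonpositive. -/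
open MvPolynomial

/-!
Fix `b` off the hyperplane `b₀ = 0`, put `s = b₀` and `h(t) = F(t, b₁, …, bₙ)`: by homogeneity
and `F(e) = 1` it is monic of degree `d`, and it is real-rooted by hyperbolicity. Specialising
`f_re, f_im` at `b` gives real polynomials `P, Q` with `h(t + is) = P(t) + i Q(t)`, so `P` is
monic of degree `d` and `deg Q < d`. A common complex root `z` of `P` and `Q` would make both
`z + is` and `z̄ + is` roots of `h`, whence `s = 0`. So `P, Q` are coprime, and their resultant,
the value of `t₂ᵖ R_F` at `b`, is nonzero. Thus `R_F` has no zeros off the hyperplane. Since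
`t₂ ∤ R_F`, it is nonzero at some point of the hyperplane; by continuity its sign there is also
its sign on both open half-spaces, hence (weakly) everywhere.
-/

namespace Polynomial

variable {R : Type*} [CommRing R]

theorem sylvester_eq_submatrix_revPerm (p q : R[X]) (m n : ℕ) :
    _root_.sylvester p q m n =
      (Polynomial.sylvester p q m n).submatrix Fin.revPerm Fin.revPerm := by
  ext i j
  obtain ⟨k, rfl⟩ := Fin.revPerm.surjective j
  induction k using Fin.addCases with
  | left k =>
    simp only [_root_.sylvester, Polynomial.sylvester, Matrix.submatrix_apply, Matrix.of_apply,
      Fin.revPerm_apply, Fin.rev_rev, Fin.addCases_left, Fin.val_rev, Fin.val_castAdd, Set.mem_Icc]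
    split_ifs <;> (try congr 1) <;> omega
  | right k =>
    simp only [_root_.sylvester, Polynomial.sylvester, Matrix.submatrix_apply, Matrix.of_apply,
      Fin.revPerm_apply, Fin.rev_rev, Fin.addCases_right, Fin.val_rev, Fin.val_natAdd, Set.mem_Icc]
    split_ifs <;> (try congr 1) <;> omega

theorem det_sylvester_eq_resultant (p q : R[X]) (m n : ℕ) :
    (_root_.sylvester p q m n).det = resultant p q m n := by
  rw [sylvester_eq_submatrix_revPerm, Matrix.det_submatrix_equiv_self, resultant]

theorem resultant_natDegree_ne_zero_of_monic [IsDomain R] {p q : R[X]} {n : ℕ} (hp : p.Monic)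
    (hq : q.natDegree ≤ n) (hpq : IsCoprime p q) : resultant p q p.natDegree n ≠ 0 := by
  obtain ⟨k, rfl⟩ := Nat.exists_eq_add_of_le hq
  rw [resultant_add_right_deg _ _ _ _ _ le_rfl, coeff_natDegree, hp.leadingCoeff, one_pow, one_mul]
  exact resultant_ne_zero p q hpq

end Polynomial

theorem Finsupp.prod_pow_eq_multiset_prod_map {σ M : Type*} [CommMonoid M] (m : σ →₀ ℕ)
    (f : σ → M) : m.prod (fun i k => f i ^ k) = (m.toMultiset.map f).prod := by
  rw [Finsupp.toMultiset_map, Finsupp.prod_toMultiset,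
    Finsupp.prod_mapDomain_index (fun _ => pow_zero _) (fun _ _ _ => pow_add _ _ _)]

namespace MvPolynomial.IsHomogeneous

open Polynomial

variable {σ R : Type*} [CommRing R] {F : MvPolynomial σ R} {d : ℕ} {ℓ : σ → R[X]}

theorem card_toMultiset_of_mem_support (hF : F.IsHomogeneous d) {m : σ →₀ ℕ}
    (hm : m ∈ F.support) : Multiset.card m.toMultiset = d := by
  rw [Finsupp.card_toMultiset, hF.degree_eq_sum_deg_support hm]
  rfl

theorem natDegree_aeval_le (hF : F.IsHomogeneous d) (hℓ : ∀ i, (ℓ i).natDegree ≤ 1) :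
    (MvPolynomial.aeval ℓ F).natDegree ≤ d := by
  rw [aeval_eq_eval₂Hom, coe_eval₂Hom, eval₂_eq]
  refine natDegree_sum_le_of_forall_le _ _ fun m hm => ?_
  refine natDegree_mul_le_of_le (natDegree_C _).le ?_ |>.trans_eq (zero_add d)
  rw [← Finsupp.prod, Finsupp.prod_pow_eq_multiset_prod_map, ← hF.card_toMultiset_of_mem_support hm]
  refine (natDegree_multiset_prod_le _).trans ?_
  refine (Multiset.sum_le_card_nsmul _ 1 ?_).trans (by simp)
  simp only [Multiset.map_map, Multiset.mem_map]
  rintro _ ⟨i, -, rfl⟩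
  exact hℓ i

theorem coeff_aeval (hF : F.IsHomogeneous d) (hℓ : ∀ i, (ℓ i).natDegree ≤ 1) :
    (MvPolynomial.aeval ℓ F).coeff d = eval (fun i => (ℓ i).coeff 1) F := by
  rw [aeval_eq_eval₂Hom, coe_eval₂Hom, eval₂_eq, finsetSum_coeff, eval_eq]
  refine Finset.sum_congr rfl fun m hm => ?_
  rw [Polynomial.algebraMap_eq, Polynomial.coeff_C_mul, ← Finsupp.prod, ← Finsupp.prod,
    Finsupp.prod_pow_eq_multiset_prod_map, Finsupp.prod_pow_eq_multiset_prod_map,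
    ← hF.card_toMultiset_of_mem_support hm, ← Multiset.card_map ℓ, ← mul_one (Multiset.card _),
    coeff_multiset_prod_of_natDegree_le _ 1 (by simpa using fun i _ => hℓ i), Multiset.map_map]
  rfl

end MvPolynomial.IsHomogeneous

namespace Polynomial

open Complex

theorem taylor_map_eq_of_forall_ofReal {h P Q : ℝ[X]} {s : ℝ}
    (hPQ : ∀ x : ℝ, aeval ((x : ℂ) + s * I) h = ((P.eval x : ℝ) : ℂ) + ((Q.eval x : ℝ) : ℂ) * I) :
    taylor ((s : ℂ) * I) (h.map (algebraMap ℝ ℂ)) =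
      P.map (algebraMap ℝ ℂ) + Q.map (algebraMap ℝ ℂ) * C I := by
  refine eq_of_infinite_eval_eq _ _ ((Set.infinite_range_of_injective ofReal_injective).mono ?_)
  rintro _ ⟨x, rfl⟩
  simp only [Set.mem_ofPred_eq, taylor_eval, eval_add, eval_mul, eval_C, eval_map_algebraMap, hPQ]
  exact congr_arg₂ (· + · * I) (ofReal_eval P x) (ofReal_eval Q x)

theorem monic_natDegree_of_eq_map_add_map_mul_C_I {g : ℂ[X]} {P Q : ℝ[X]} (hg : g.Monic)
    (hPQ : g = P.map (algebraMap ℝ ℂ) + Q.map (algebraMap ℝ ℂ) * C I) :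
    P.Monic ∧ P.natDegree = g.natDegree ∧ Q.natDegree ≤ g.natDegree - 1 := by
  have hcoeff : ∀ k, P.coeff k = (g.coeff k).re ∧ Q.coeff k = (g.coeff k).im := fun k => by
    simp [hPQ]
  have hlead : P.coeff g.natDegree = 1 := by simp [(hcoeff _).1, hg.coeff_natDegree]
  have hdeg : P.natDegree = g.natDegree := by
    refine le_antisymm (natDegree_le_iff_coeff_eq_zero.2 fun k hk => ?_)
      (le_natDegree_of_ne_zero (by simp [hlead]))
    simp [(hcoeff k).1, coeff_eq_zero_of_natDegree_lt hk]
  refine ⟨by rw [Monic, leadingCoeff, hdeg, hlead], hdeg,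
    natDegree_le_iff_coeff_eq_zero.2 fun k hk => ?_⟩
  obtain rfl | hk := eq_or_lt_of_le (show g.natDegree ≤ k by omega)
  · simp [(hcoeff _).2, hg.coeff_natDegree]
  · simp [(hcoeff k).2, coeff_eq_zero_of_natDegree_lt hk]

theorem isCoprime_of_realRooted {h P Q : ℝ[X]} {s : ℝ} (hh : RealRooted h) (hs : s ≠ 0)
    (hPQ : taylor ((s : ℂ) * I) (h.map (algebraMap ℝ ℂ)) =
      P.map (algebraMap ℝ ℂ) + Q.map (algebraMap ℝ ℂ) * C I) :
    IsCoprime P Q := by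
  have root_im : ∀ z : ℂ, aeval z P = 0 → aeval z Q = 0 → z.im + s = 0 := by
    intro z hP hQ
    have hz := congr_arg (eval z) hPQ
    simp only [taylor_eval, eval_map_algebraMap, eval_add, eval_mul, eval_C, hP, hQ] at hz
    have := hh _ (by simpa using hz)
    simpa using this
  refine (isCoprime_iff_aeval_ne_zero_of_isAlgClosed (K := ℂ) (p := P) (q := Q)).2 fun z => ?_
  by_contra! hz
  have h₁ := root_im z hz.1 hz.2
  have h₂ := root_im (starRingEnd ℂ z) (by rw [aeval_conj, hz.1, map_zero])
    (by rw [aeval_conj, hz.2, map_zero])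
  rw [conj_im] at h₂
  exact hs (by linarith)

theorem resultant_ne_zero_of_realRooted {h P Q : ℝ[X]} {s : ℝ} (hh : RealRooted h)
    (hmon : h.Monic) (hs : s ≠ 0)
    (hPQ : ∀ x : ℝ, aeval ((x : ℂ) + s * I) h = ((P.eval x : ℝ) : ℂ) + ((Q.eval x : ℝ) : ℂ) * I) :
    resultant P Q h.natDegree (h.natDegree - 1) ≠ 0 := by
  have htaylor := taylor_map_eq_of_forall_ofReal hPQ
  have hdeg : (taylor ((s : ℂ) * I) (h.map (algebraMap ℝ ℂ))).natDegree = h.natDegree := by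
    rw [natDegree_taylor, natDegree_map]
  obtain ⟨hPmon, hPdeg, hQdeg⟩ := monic_natDegree_of_eq_map_add_map_mul_C_I
    (by rw [Monic, leadingCoeff_taylor]; exact hmon.map _) htaylor
  rw [hdeg] at hPdeg hQdeg
  rw [← hPdeg] at hQdeg ⊢
  exact resultant_natDegree_ne_zero_of_monic hPmon hQdeg (isCoprime_of_realRooted hh hs htaylor)

end Polynomial

theorem MvPolynomial.IsHomogeneous.monic_aeval_C_mul_X_sub_C {σ R : Type*} [CommRing R]
    [Nontrivial R] {F : MvPolynomial σ R} {d : ℕ} (hF : F.IsHomogeneous d) {e : σ → R}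
    (he : MvPolynomial.eval e F = 1) (a : σ → R) :
    let h := MvPolynomial.aeval (fun i => Polynomial.C (e i) * Polynomial.X - Polynomial.C (a i)) F
    h.Monic ∧ h.natDegree = d := by
  have hℓ : ∀ i, (Polynomial.C (e i) * Polynomial.X - Polynomial.C (a i)).natDegree ≤ 1 :=
    fun i => by compute_degree
  have hcoeff := hF.coeff_aeval hℓ
  simp only [Polynomial.coeff_sub, Polynomial.coeff_C_mul_X, Polynomial.coeff_C, if_true,
    one_ne_zero, if_false, sub_zero, he] at hcoeff
  exact ⟨Polynomial.monic_of_natDegree_le_of_coeff_eq_one d (hF.natDegree_aeval_le hℓ) hcoeff,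
    Polynomial.natDegree_eq_of_le_of_coeff_ne_zero (hF.natDegree_aeval_le hℓ) (by simp [hcoeff])⟩

theorem IsPreconnected.mul_pos_of_ne_zero {α : Type*} [TopologicalSpace α] {s : Set α}
    (hs : IsPreconnected s) {f : α → ℝ} (hf : ContinuousOn f s) (hne : ∀ x ∈ s, f x ≠ 0)
    {x y : α} (hx : x ∈ s) (hy : y ∈ s) : 0 < f x * f y := by
  rcases (hne x hx).lt_or_gt with hx0 | hx0 <;> rcases (hne y hy).lt_or_gt with hy0 | hy0
  · exact mul_pos_of_neg_of_neg hx0 hy0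
  · obtain ⟨z, hz, hz0⟩ := hs.intermediate_value hx hy hf ⟨hx0.le, hy0.le⟩
    exact absurd hz0 (hne z hz)
  · obtain ⟨z, hz, hz0⟩ := hs.intermediate_value hy hx hf ⟨hy0.le, hx0.le⟩
    exact absurd hz0 (hne z hz)
  · exact mul_pos hx0 hy0

section CoordinateHyperplane

variable {ι : Type*} [DecidableEq ι] {f : (ι → ℝ) → ℝ} {i : ι}

theorem mul_pos_of_ne_zero_off_hyperplane (hf : Continuous f) (hne : ∀ b, b i ≠ 0 → f b ≠ 0)
    {c : ι → ℝ} (hc0 : c i = 0) (hc : f c ≠ 0) {b : ι → ℝ} (hb : b i ≠ 0) : 0 < f c * f b := by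
  -- Push `c` slightly off the hyperplane towards `b`, then join it to `b` in that half-space.
  have hφ : Continuous fun ε : ℝ => f c * f (Function.update c i (ε * b i)) := by fun_prop
  have hupdate : Function.update c i (0 * b i) = c := by
    rw [zero_mul, ← hc0, Function.update_eq_self]
  have hφ0 : 0 < f c * f (Function.update c i (0 * b i)) := by
    rw [hupdate]
    exact mul_self_pos.2 hc
  obtain ⟨ε, hε, hε0⟩ := ((continuousAt_const.eventually_lt hφ.continuousAt hφ0).filter_mono
    nhdsWithin_le_nhds |>.and (self_mem_nhdsWithin (s := Set.Ioi 0))).exists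
  set x := Function.update c i (ε * b i)
  have hs : IsPreconnected {y : ι → ℝ | 0 < y i * b i} :=
    (convex_halfSpace_gt ⟨fun y z => add_mul _ _ _, fun r y => mul_assoc _ _ _⟩ 0).isPreconnected
  have hxb := hs.mul_pos_of_ne_zero hf.continuousOn (fun y hy => hne y (left_ne_zero_of_mul hy.ne'))
    (show 0 < x i * b i by simpa [x, mul_assoc] using mul_pos hε0 (mul_self_pos.2 hb))
    (mul_self_pos.2 hb)
  have h := mul_pos hε hxb
  rw [show f c * f x * (f x * f b) = f c * f b * (f x * f x) by ring] at h
  exact pos_of_mul_pos_left h (mul_self_nonneg _)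

theorem nonneg_mul_of_ne_zero_off_hyperplane (hf : Continuous f) (hne : ∀ b, b i ≠ 0 → f b ≠ 0)
    {c : ι → ℝ} (hc0 : c i = 0) (hc : f c ≠ 0) (b : ι → ℝ) : 0 ≤ f c * f b := by
  have hψ : Continuous fun t : ℝ => f c * f (Function.update b i t) := by fun_prop
  have hclosed : IsClosed {t : ℝ | 0 ≤ f c * f (Function.update b i t)} :=
    isClosed_le continuous_const hψ
  have hoff : ({0}ᶜ : Set ℝ) ⊆ {t | 0 ≤ f c * f (Function.update b i t)} := fun t ht =>
    (mul_pos_of_ne_zero_off_hyperplane hf hne hc0 hc (by simpa using ht)).le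
  have := hclosed.closure_subset_iff.2 hoff
  rw [(dense_compl_singleton (0 : ℝ)).closure_eq] at this
  simpa using this (Set.mem_univ (b i))

end CoordinateHyperplane

theorem MvPolynomial.exists_eval_ne_zero_of_not_X_zero_dvd {n : ℕ} {K : Type*} [Field K]
    [Infinite K] {p : MvPolynomial (Fin (n + 1)) K} (hp : ¬ X 0 ∣ p) :
    ∃ c : Fin (n + 1) → K, c 0 = 0 ∧ eval c p ≠ 0 := by
  contrapose! hp
  rw [← map_dvd_iff (finSuccEquiv K n), finSuccEquiv_X_zero, Polynomial.X_dvd_iff]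
  refine MvPolynomial.funext fun a => ?_
  have := hp (Fin.cons 0 a) rfl
  rwa [eval_eq_eval_mv_eval', ← Polynomial.coeff_zero_eq_eval_zero, Polynomial.coeff_map] at this

section Hyperbolic

variable {n d : ℕ} {F : MvPolynomial (Fin (n + 1)) ℝ} {e : Fin (n + 1) → ℝ}

theorem eval_det_sylvester_ne_zero_of_hyperbolic (hhom : F.IsHomogeneous d)
    (he : e = fun i => if i = 0 then 1 else 0) (hF : MvPolynomial.eval e F = 1)
    (hyp : Hyperbolic F e) {fre fim : Polynomial (MvPolynomial (Fin (n + 1)) ℝ)}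
    (hdecomp : ∀ (s₁ s₂ : ℝ) (a : Fin n → ℝ),
      MvPolynomial.aeval
          (Fin.cons ((s₁ : ℂ) + (s₂ : ℂ) * Complex.I) (fun i => (a i : ℂ))) F
        = (((fre.map (MvPolynomial.eval (Fin.cons s₂ a))).eval s₁ : ℝ) : ℂ)
          + (((fim.map (MvPolynomial.eval (Fin.cons s₂ a))).eval s₁ : ℝ) : ℂ) * Complex.I)
    {b : Fin (n + 1) → ℝ} (hb : b 0 ≠ 0) :
    MvPolynomial.eval b (_root_.sylvester fre fim d (d - 1)).det ≠ 0 := by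
  -- so that `F(t e - a) = F(t, b₁, …, bₙ)`
  set a : Fin (n + 1) → ℝ := Fin.cons 0 (-Fin.tail b)
  obtain ⟨hmon, hdeg⟩ := hhom.monic_aeval_C_mul_X_sub_C hF a
  have hcomplex : ∀ w : ℂ,
      Polynomial.aeval w
          (MvPolynomial.aeval (fun i => Polynomial.C (e i) * Polynomial.X - Polynomial.C (a i)) F) =
        MvPolynomial.aeval (Fin.cons w (fun i => (Fin.tail b i : ℂ))) F := by
    intro w
    rw [MvPolynomial.comp_aeval_apply]
    refine congrArg (MvPolynomial.aeval · F) (funext fun i => ?_)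
    refine Fin.cases ?_ (fun j => ?_) i <;> simp [he, a, Fin.succ_ne_zero]
  have hPQ := fun x : ℝ => (hcomplex _).trans ((hdecomp x (b 0) (Fin.tail b)).trans
    (by rw [Fin.cons_self_tail]))
  have := Polynomial.resultant_ne_zero_of_realRooted (hyp.2 a) hmon hb hPQ
  rwa [hdeg, Polynomial.resultant_map_map, ← Polynomial.det_sylvester_eq_resultant] at this

end Hyperbolic

theorem RF_constant_sign_of_hyperbolic_general {n d : ℕ}
    (F : MvPolynomial (Fin (n + 1)) ℝ) (hhom : F.IsHomogeneous d)
    (e : Fin (n + 1) → ℝ) (he : e = fun i => if i = 0 then 1 else 0)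
    (hF : MvPolynomial.eval e F = 1)
    (hyp : Hyperbolic F e)
    (fre fim : Polynomial (MvPolynomial (Fin (n + 1)) ℝ))
    (hdecomp : ∀ (s₁ s₂ : ℝ) (a : Fin n → ℝ),
      MvPolynomial.aeval
          (Fin.cons ((s₁ : ℂ) + (s₂ : ℂ) * Complex.I) (fun i => (a i : ℂ))) F
        = (((fre.map (MvPolynomial.eval (Fin.cons s₂ a))).eval s₁ : ℝ) : ℂ)
          + (((fim.map (MvPolynomial.eval (Fin.cons s₂ a))).eval s₁ : ℝ) : ℂ) * Complex.I)
    (p : ℕ) (RF : MvPolynomial (Fin (n + 1)) ℝ)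
    (hfact : (sylvester fre fim d (d - 1)).det = (MvPolynomial.X 0) ^ p * RF)
    (hndvd : ¬ (MvPolynomial.X 0 : MvPolynomial (Fin (n + 1)) ℝ) ∣ RF) :
    (∀ b : Fin (n + 1) → ℝ, 0 ≤ MvPolynomial.eval b RF) ∨
      (∀ b : Fin (n + 1) → ℝ, MvPolynomial.eval b RF ≤ 0) := by
  have hne : ∀ b : Fin (n + 1) → ℝ, b 0 ≠ 0 → MvPolynomial.eval b RF ≠ 0 := fun b hb hRF =>
    eval_det_sylvester_ne_zero_of_hyperbolic hhom he hF hyp hdecomp hb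
      (by rw [hfact, map_mul, hRF, mul_zero])
  obtain ⟨c, hc0, hc⟩ := MvPolynomial.exists_eval_ne_zero_of_not_X_zero_dvd hndvd
  have hsign := nonneg_mul_of_ne_zero_off_hyperplane (MvPolynomial.continuous_eval RF) hne hc0 hc
  rcases hc.lt_or_gt with hneg | hpos
  · exact Or.inr fun b => nonpos_of_mul_nonneg_right (hsign b) hneg
  · exact Or.inl fun b => nonneg_of_mul_nonneg_right (hsign b) hpos

/-- Let `F` be a form of degree `d` with `F(e) = 1`, `e = (1,0,…,0)`, hyperbolic with
respect to `e`. Setting `f_x(t) = F(t,x)` and decomposing `f_x(t₁+it₂) = f_re + i f_im`,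
write `Res_{t₁}(f_re, f_im) = t₂^p ⬝ R_F` with `t₂ ∤ R_F`. Then `R_F` has constant sign on
`ℝ^{n+1}`: it is everywhere nonnegative or everywhere nonpositive. -/
theorem RF_constant_sign_of_hyperbolic {n d : ℕ} (hd : 0 < d)
    (F : MvPolynomial (Fin (n + 1)) ℝ) (hhom : F.IsHomogeneous d)
    (e : Fin (n + 1) → ℝ) (he : e = fun i => if i = 0 then 1 else 0)
    (hF : MvPolynomial.eval e F = 1)
    (hyp : Hyperbolic F e)
    (fre fim : Polynomial (MvPolynomial (Fin (n + 1)) ℝ))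
    (hdecomp : ∀ (s₁ s₂ : ℝ) (a : Fin n → ℝ),
      MvPolynomial.aeval
          (Fin.cons ((s₁ : ℂ) + (s₂ : ℂ) * Complex.I) (fun i => (a i : ℂ))) F
        = (((fre.map (MvPolynomial.eval (Fin.cons s₂ a))).eval s₁ : ℝ) : ℂ)
          + (((fim.map (MvPolynomial.eval (Fin.cons s₂ a))).eval s₁ : ℝ) : ℂ) * Complex.I)
    (p : ℕ) (RF : MvPolynomial (Fin (n + 1)) ℝ)
    (hfact : (sylvester fre fim d (d - 1)).det = (MvPolynomial.X 0) ^ p * RF)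
    (hndvd : ¬ (MvPolynomial.X 0 : MvPolynomial (Fin (n + 1)) ℝ) ∣ RF) :
    (∀ b : Fin (n + 1) → ℝ, 0 ≤ MvPolynomial.eval b RF) ∨
      (∀ b : Fin (n + 1) → ℝ, MvPolynomial.eval b RF ≤ 0) :=
  RF_constant_sign_of_hyperbolic_general F hhom e he hF hyp fre fim hdecomp p RF hfact hndvd
end

section
/- The cubic form F_c = x_0 x_2² − (x_1 − (1/c)x_0)(x_1² − c x_0²), for a real parameter c ≠ 0, is hyperbolic with respect to e = (1,0,0) if c > 0, and is not hyperbolic with respect to e if c < 0. -/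
open MvPolynomial

/-- The cubic form `F_c = x₀x₂² - (x₁ - (1/c)x₀)(x₁² - cx₀²)`, for a real parameter
`c ≠ 0`, is hyperbolic with respect to `e = (1,0,0)` if `c > 0`, and not hyperbolic with
respect to `e` if `c < 0`. -/
theorem Fc_hyperbolic_iff (c : ℝ) (hc : c ≠ 0)
    (F : MvPolynomial (Fin 3) ℝ)
    (hF : F = X 0 * X 2 ^ 2 - (X 1 - C (1 / c) * X 0) * (X 1 ^ 2 - C c * X 0 ^ 2))
    (e : Fin 3 → ℝ) (he : e = fun i => if i = 0 then 1 else 0) :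
    (0 < c → Hyperbolic F e) ∧ (c < 0 → ¬ Hyperbolic F e) := by
  subst hF he
  constructor
  · intro hcpos
    constructor
    · -- eval e F = -1 ≠ 0
      simp only [map_sub, map_mul, map_pow, eval_X, eval_C]
      norm_num [Fin.ext_iff]
      exact hc
    · intro a z hz
      simp only [map_sub, map_mul, map_pow, MvPolynomial.aeval_X, MvPolynomial.aeval_C,
        Polynomial.aeval_X, Polynomial.aeval_C, map_ofNat] at hz
      norm_num [Fin.ext_iff] at hz
      have hcc : (c:ℂ) ≠ 0 := by exact_mod_cast hc
      obtain ⟨x, y⟩ := z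
      rw [Complex.mk_eq_add_mul_I] at hz
      field_simp at hz
      show y = 0
      have hre := congrArg Complex.re hz
      have him := congrArg Complex.im hz
      simp only [Complex.add_re, Complex.add_im, Complex.mul_re, Complex.mul_im, Complex.sub_re,
        Complex.sub_im, Complex.ofReal_re, Complex.ofReal_im, Complex.I_re, Complex.I_im,
        Complex.neg_re, Complex.neg_im, Complex.zero_re, Complex.zero_im, Complex.one_re,
        Complex.one_im, pow_succ, pow_zero,
        one_mul, mul_zero, zero_mul, mul_one, sub_zero, zero_sub, add_zero, zero_add, neg_zero,
        neg_neg, mul_neg, neg_mul] at hre him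
      by_contra hy
      set u := x - a 0 with hu
      set b := a 1 with hb
      set d := a 2 with hd
      have hP1 : c*d^2 + b^2 - 3*c*u^2 + c*y^2 - 2*b*c^2*u = 0 := by
        have h1 : y * (c*d^2 + b^2 - 3*c*u^2 + c*y^2 - 2*b*c^2*u) = 0 := by linear_combination him
        exact (mul_eq_zero.mp h1).resolve_left hy
      have hP2 : (2*u + b*c)*(u^2 + y^2) + b^3 = 0 := by
        have h2 : c * ((2*u + b*c)*(u^2 + y^2) + b^3) = 0 := by linear_combination hre - u * hP1
        exact (mul_eq_zero.mp h2).resolve_left hc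
      have hy2 : 0 < y^2 := lt_of_le_of_ne (sq_nonneg y) (Ne.symm (pow_ne_zero 2 hy))
      have key : 4*c^3*d^6 + 12*b^2*c^2*d^4 + b^2*c^5*d^4 + 12*b^4*c*d^2 + 20*b^4*c^4*d^2
          + 4*b^6*(1-c^3)^2 = -(4*c^3*y^2*((3*u+b*c)^2+y^2)^2) := by
        linear_combination
          (4*c^2*d^4 + 8*b^2*c*d^2 + b^2*c^4*d^2 + 4*b^4 + 19*b^4*c^3 - 4*y^2*c^2*d^2
            - 4*y^2*b^2*c - y^2*b^2*c^4 + 4*y^4*c^2 + 8*u*b*c^3*d^2 + 8*u*b^3*c^2 + 2*u*b^3*c^5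
            - 16*u*y^2*b*c^3 + 12*u^2*c^2*d^2 + 12*u^2*b^2*c + 19*u^2*b^2*c^4 - 24*u^2*y^2*c^2
            + 48*u^3*b*c^3 + 36*u^4*c^2) * hP1 +
          (-27*b^3*c^3 + 4*b^3*c^6 + 9*y^2*b*c^4 + 36*u*b^2*c^5 + 54*u*y^2*c^3 + 81*u^2*b*c^4
            + 54*u^3*c^3) * hP2
      have hneg : 0 < 4*c^3*y^2*((3*u+b*c)^2+y^2)^2 := by positivity
      have t1 : 0 ≤ c^3*d^6 := by positivity
      have t2 : 0 ≤ b^2*c^2*d^4 := by positivity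
      have t3 : 0 ≤ b^2*c^5*d^4 := by positivity
      have t4 : 0 ≤ b^4*c*d^2 := by positivity
      have t5 : 0 ≤ b^4*c^4*d^2 := by positivity
      have t6 : 0 ≤ b^6*(1-c^3)^2 := by positivity
      linarith
  · intro hcn hyp
    obtain ⟨-, h⟩ := hyp
    have hinv : 0 < -(1/c) := by
      have := one_div_neg.mpr hcn
      linarith
    set s : ℝ := Real.sqrt (-(1/c)) with hs
    have hspos : 0 < s := Real.sqrt_pos.mpr hinv
    have hs2 : s^2 = -(1/c) := Real.sq_sqrt hinv.le
    have hcc : (c:ℂ) ≠ 0 := by exact_mod_cast hc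
    have hz2 : (c:ℂ) * ((Complex.I * s) : ℂ)^2 = 1 := by
      have h1 : (s:ℂ)^2 = ((s^2 : ℝ) : ℂ) := by push_cast; ring
      rw [mul_pow, Complex.I_sq, h1, hs2]
      push_cast
      field_simp
    have := h (fun i => if i = 1 then 1 else 0) (Complex.I * s) ?_
    · simp at this
      exact absurd this hspos.ne'
    · simp only [map_sub, map_mul, map_pow, MvPolynomial.aeval_X, MvPolynomial.aeval_C,
        Polynomial.aeval_X, Polynomial.aeval_C, map_ofNat]
      norm_num [Fin.ext_iff]
      field_simp
      right
      linear_combination -hz2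
end

section
/- Let F ∈ ℝ[t, x_1,...,x_n] and let ℓ be a linear form in x_1,...,x_n. If F is hyperbolic with respect to e = (1,0,...,0) and s ≥ 0, then the polynomial T_s^ℓ(F) = F + s·ℓ·(∂F/∂t) is also hyperbolic with respect to e. -/
/-!
On the line `t ↦ t • e - a` the operator becomes `p ↦ p + k • p'` with the real constant
`k = -s ℓ(a)`, because `ℓ` does not involve `t`; and `ℓ(e) = 0` leaves the value at `e` unchanged.
If `p` has only real roots and `z` is not real, the imaginary part of `p'(z)/p(z) = ∑ 1/(z - r)`
has the sign of `-Im z`, and vanishes only if `p` is constant. So `p'(z)/p(z) ≠ -1/k`, and `z` is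
not a root of `p + k • p'`.
-/

open MvPolynomial

theorem Complex.im_sum_one_div_sub_of_im_eq_zero (z : ℂ) (s : Multiset ℂ)
    (hs : ∀ r ∈ s, r.im = 0) :
    (s.map fun r => 1 / (z - r)).sum.im = -z.im * (s.map fun r => (normSq (z - r))⁻¹).sum := by
  induction s using Multiset.induction_on with
  | empty => simp
  | cons r t ih =>
    rw [Multiset.forall_mem_cons] at hs
    simp only [Multiset.map_cons, Multiset.sum_cons]
    rw [add_im, ih hs.2, one_div, inv_im, sub_im, hs.1, sub_zero]
    ring

theorem Complex.im_sum_one_div_sub_ne_zero {z : ℂ} (hz : z.im ≠ 0) {s : Multiset ℂ}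
    (hs : ∀ r ∈ s, r.im = 0) (hs₀ : s ≠ 0) :
    (s.map fun r => 1 / (z - r)).sum.im ≠ 0 := by
  rw [im_sum_one_div_sub_of_im_eq_zero z s hs]
  have hzr : ∀ r ∈ s, z - r ≠ 0 := fun r hr h => hz (by simpa [hs r hr] using congrArg im h)
  have hpos := Multiset.sum_lt_sum_of_nonempty (f := fun _ => (0 : ℝ)) hs₀
    fun r hr => inv_pos.2 (normSq_pos.2 (hzr r hr))
  rw [Multiset.map_const', Multiset.sum_replicate, smul_zero] at hpos
  exact mul_ne_zero (neg_ne_zero.2 hz) hpos.ne'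

namespace Polynomial

theorem eval_add_ofReal_mul_derivative_ne_zero {P : ℂ[X]} (hP₀ : P ≠ 0)
    (hP : ∀ r ∈ P.roots, r.im = 0) {z : ℂ} (hz : z.im ≠ 0) (k : ℝ) :
    P.eval z + k * P.derivative.eval z ≠ 0 := by
  have hPz : P.eval z ≠ 0 := fun h => hz (hP z ((mem_roots hP₀).2 h))
  have hlog := (IsAlgClosed.splits P).eval_derivative_div_eval_of_ne_zero hPz
  intro h
  have hk : (k : ℂ) * (P.derivative.eval z / P.eval z) = -1 := by
    field_simp
    linear_combination h
  rcases eq_or_ne P.roots 0 with h₀ | h₀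
  · simp [hlog, h₀] at hk
  have hk₀ : k ≠ 0 := by
    rintro rfl
    simp at hk
  refine Complex.im_sum_one_div_sub_ne_zero hz hP h₀ ?_
  rw [← hlog]
  simpa [hk₀] using congrArg Complex.im hk

end Polynomial

open Polynomial in
theorem RealRooted.add_C_mul_derivative {p : ℝ[X]} (hp : RealRooted p) (k : ℝ) :
    RealRooted (p + Polynomial.C k * derivative p) := by
  intro z hz
  by_contra hzim
  have hp₀ : p ≠ 0 := by
    rintro rfl
    simpa using hp Complex.I (by simp)
  set P := p.map (algebraMap ℝ ℂ)
  have hP₀ : P ≠ 0 := Polynomial.map_ne_zero hp₀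
  have hP : ∀ r ∈ P.roots, r.im = 0 := fun r hr =>
    hp r (by rw [← eval_map_algebraMap]; exact (mem_roots hP₀).1 hr)
  refine eval_add_ofReal_mul_derivative_ne_zero hP₀ hP hzim k ?_
  simpa [P, eval_map_algebraMap, derivative_map] using hz

theorem MvPolynomial.derivative_aeval {σ R : Type*} [Fintype σ] [CommSemiring R]
    (g : σ → Polynomial R) (F : MvPolynomial σ R) :
    Polynomial.derivative (aeval g F) =
      ∑ i, aeval g (pderiv i F) * Polynomial.derivative (g i) := by
  classical
  induction F using MvPolynomial.induction_on with
  | C r => simp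
  | add p q hp hq => simp [hp, hq, add_mul, Finset.sum_add_distrib]
  | mul_X p j hp =>
    simp only [map_mul, aeval_X, Polynomial.derivative_mul, hp, Derivation.leibniz, pderiv_X,
      smul_eq_mul, map_add, add_mul, Finset.sum_add_distrib, Finset.sum_mul, Pi.single_apply,
      mul_ite, mul_one, mul_zero, apply_ite (aeval g), map_zero, ite_mul, zero_mul,
      Finset.sum_ite_eq, Finset.mem_univ, if_true]
    rw [add_comm]
    congr 1
    exact Finset.sum_congr rfl fun i _ => by ring

theorem Nuij_operator_preserves_hyperbolicity_general {n : ℕ}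
    (F : MvPolynomial (Fin (n + 1)) ℝ)
    (e : Fin (n + 1) → ℝ) (he : e = fun i => if i = 0 then 1 else 0)
    (c : Fin n → ℝ) (s : ℝ)
    (hF : Hyperbolic F e) :
    Hyperbolic (F + C s * (∑ i : Fin n, C (c i) * X i.succ) * pderiv 0 F) e := by
  subst he
  refine ⟨by simpa [Fin.succ_ne_zero] using hF.1, fun a => ?_⟩
  set g : Fin (n + 1) → Polynomial ℝ :=
    fun i => Polynomial.C (if i = 0 then 1 else 0) * Polynomial.X - Polynomial.C (a i)
  have hℓ : aeval g (∑ i : Fin n, C (c i) * X i.succ) = Polynomial.C (-∑ i, c i * a i.succ) := by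
    simp [g, Fin.succ_ne_zero]
  have hderiv : aeval g (pderiv 0 F) = Polynomial.derivative (aeval g F) := by
    simp [derivative_aeval, g, Fin.sum_univ_succ, Fin.succ_ne_zero]
  have hT : aeval g (F + C s * (∑ i : Fin n, C (c i) * X i.succ) * pderiv 0 F) =
      aeval g F + Polynomial.C (s * -∑ i, c i * a i.succ) * Polynomial.derivative (aeval g F) := by
    simp only [map_add, map_mul, hℓ, hderiv, aeval_C, Polynomial.algebraMap_eq]
  rw [hT]
  exact (hF.2 a).add_C_mul_derivative _

/-- Nuij's operator preserves hyperbolicity: if `F ∈ ℝ[t,x₁,…,xₙ]` (variable `0` being `t`)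
is hyperbolic with respect to `e = (1,0,…,0)`, `ℓ = Σ cᵢxᵢ` is a linear form in the
variables `x₁,…,xₙ`, and `s ≥ 0`, then `T_s^ℓ(F) = F + s·ℓ·(∂F/∂t)` is also hyperbolic
with respect to `e`. -/
theorem Nuij_operator_preserves_hyperbolicity {n : ℕ}
    (F : MvPolynomial (Fin (n + 1)) ℝ)
    (e : Fin (n + 1) → ℝ) (he : e = fun i => if i = 0 then 1 else 0)
    (c : Fin n → ℝ) (s : ℝ) (hs : 0 ≤ s)
    (hF : Hyperbolic F e) :
    Hyperbolic (F + C s * (∑ i : Fin n, C (c i) * X i.succ) * pderiv 0 F) e :=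
  Nuij_operator_preserves_hyperbolicity_general F e he c s hF
end

section
/- If p ∈ ℝ[t] is a real-rooted polynomial of degree d ≥ 1 and c ∈ ℝ, then p + c·p' is real-rooted. Moreover, if c ≠ 0, then the number of distinct roots of p + c p' is strictly greater than the number of distinct roots of p unless all roots of p are already simple. -/
open Polynomial Filter Real Topology Set

lemma sum_count_le {α : Type*} [DecidableEq α] (F : Finset α) (M : Multiset α) :
    ∑ x ∈ F, M.count x ≤ Multiset.card M := by
  calc ∑ x ∈ F, M.count x = ∑ x ∈ F ∩ M.toFinset, M.count x := by
        refine (Finset.sum_subset Finset.inter_subset_left ?_).symm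
        intro x hx hx'
        rw [Multiset.count_eq_zero]
        intro hmem
        exact hx' (Finset.mem_inter.mpr ⟨hx, Multiset.mem_toFinset.mpr hmem⟩)
    _ ≤ ∑ x ∈ M.toFinset, M.count x :=
        Finset.sum_le_sum_of_subset Finset.inter_subset_right
    _ = Multiset.card M := Multiset.toFinset_sum_count_eq M

lemma card_roots_of_im_eq_zero (p : ℝ[X]) (hp0 : p ≠ 0)
    (h : ∀ z : ℂ, Polynomial.aeval z p = 0 → z.im = 0) :
    p.roots.card = p.natDegree := by
  have inj : Function.Injective (algebraMap ℝ ℂ) := (algebraMap ℝ ℂ).injective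
  set P := p.map (algebraMap ℝ ℂ) with hP
  have hP0 : P ≠ 0 := (Polynomial.map_ne_zero_iff inj).mpr hp0
  have hsplit : Splits P := IsAlgClosed.splits P
  have hcard : p.natDegree = Multiset.card P.roots := by
    rw [← natDegree_map (algebraMap ℝ ℂ)]; exact hsplit.natDegree_eq_card_roots
  -- every root of P is real
  have hre : ∀ z ∈ P.roots.toFinset, ((z.re : ℂ)) = z := by
    intro z hz
    have hz' : aeval z p = 0 := by
      have := (mem_roots hP0).mp (Multiset.mem_toFinset.mp hz)
      rw [aeval_def, eval₂_eq_eval_map]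
      exact this
    have := h z hz'
    exact Complex.ext rfl (by simp [this])
  have hcount : ∀ z ∈ P.roots.toFinset, P.roots.count z = p.roots.count z.re := by
    intro z hz
    rw [count_roots, count_roots]
    conv_lhs => rw [← hre z hz]
    exact (eq_rootMultiplicity_map (p := p) inj z.re).symm
  have hinj : Set.InjOn Complex.re P.roots.toFinset := by
    intro a ha b hb hab
    rw [← hre a ha, ← hre b hb, hab]
  have : Multiset.card P.roots ≤ Multiset.card p.roots := by
    calc Multiset.card P.roots = ∑ z ∈ P.roots.toFinset, P.roots.count z :=
          (Multiset.toFinset_sum_count_eq _).symm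
      _ = ∑ z ∈ P.roots.toFinset, p.roots.count z.re := Finset.sum_congr rfl hcount
      _ = ∑ x ∈ P.roots.toFinset.image Complex.re, p.roots.count x := by
          rw [Finset.sum_image (fun a ha b hb => hinj ha hb)]
      _ ≤ Multiset.card p.roots := sum_count_le _ _
  have h2 : Multiset.card p.roots ≤ p.natDegree := p.card_roots'
  omega

lemma realRooted_of_card_roots (p : ℝ[X]) (hp0 : p ≠ 0)
    (h : Multiset.card p.roots = p.natDegree) :
    ∀ z : ℂ, Polynomial.aeval z p = 0 → z.im = 0 := by
  intro z hz
  have hsplit : Splits p := splits_iff_card_roots.mpr h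
  have hfact := hsplit.eq_prod_roots
  rw [hfact] at hz
  simp only [map_mul, map_multiset_prod] at hz
  rcases mul_eq_zero.mp hz with h1 | h2
  · exact absurd (by simpa using h1) (leadingCoeff_ne_zero.mpr hp0)
  · have h0 : (0 : ℂ) ∈ Multiset.map (⇑(aeval z)) (Multiset.map (fun a => X - C a) p.roots) :=
      Multiset.prod_eq_zero_iff.mp h2
    rw [Multiset.map_map] at h0
    obtain ⟨r, hr, hr0⟩ := Multiset.mem_map.mp h0
    simp only [Function.comp_apply, map_sub, aeval_X, aeval_C] at hr0
    have : z = (r : ℂ) := by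
      have := sub_eq_zero.mp hr0
      simpa using this
    rw [this]; simp

lemma hasDerivAt_H (p : ℝ[X]) (c : ℝ) (hc : c ≠ 0) (x : ℝ) :
    HasDerivAt (fun x => p.eval x * exp (x / c))
      (Real.exp (x / c) / c * (p + C c * p.derivative).eval x) x := by
  have h1 := p.hasDerivAt x
  have h2 : HasDerivAt (fun x : ℝ => Real.exp (x / c)) (Real.exp (x / c) * (1 / c)) x :=
    ((hasDerivAt_id x).div_const c).exp
  have h3 := h1.fun_mul h2
  refine h3.congr_deriv ?_
  simp only [eval_add, eval_mul, eval_C]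
  field_simp
  ring

lemma tendsto_poly_exp_atTop (P : ℝ[X]) (b : ℝ) (hb : 0 < b) :
    Tendsto (fun x => P.eval x * exp (-(b * x))) atTop (𝓝 0) := by
  have h := (P.comp (C b⁻¹ * X)).tendsto_div_exp_atTop
  have hb' : Tendsto (fun x : ℝ => b * x) atTop atTop :=
    Tendsto.const_mul_atTop hb tendsto_id
  have h2 := h.comp hb'
  convert h2 using 2 with x
  simp only [Function.comp_apply, eval_comp, eval_mul, eval_C, eval_X]
  rw [inv_mul_cancel_left₀ hb.ne']
  rw [exp_neg, div_eq_mul_inv]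

lemma tendsto_poly_exp_atBot (P : ℝ[X]) (c : ℝ) (hc : 0 < c) :
    Tendsto (fun x => P.eval x * exp (x / c)) atBot (𝓝 0) := by
  have h := (tendsto_poly_exp_atTop (P.comp (-X)) (1 / c) (by positivity)).comp
    tendsto_neg_atBot_atTop
  convert h using 2 with x
  simp only [Function.comp_apply, eval_comp, eval_neg, eval_X]
  congr 1
  · ring_nf
  · congr 1; field_simp

/-- For `c > 0`: to the left of any root of `p` there is a root of `p + c p'`
lying strictly to the right of all smaller roots of `p`. -/
lemma exists_left_root (p : ℝ[X]) (hp0 : p ≠ 0) (c : ℝ) (hc : 0 < c) (r : ℝ)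
    (hr : p.eval r = 0) :
    ∃ x, (p + C c * p.derivative).eval x = 0 ∧ x < r ∧
      ∀ s, p.eval s = 0 → s < r → s < x := by
  classical
  set q := p + C c * p.derivative with hq
  set H : ℝ → ℝ := fun x => p.eval x * exp (x / c) with hH
  have hder : ∀ x, HasDerivAt H (Real.exp (x / c) / c * q.eval x) x :=
    fun x => hasDerivAt_H p c hc.ne' x
  have hcont : Continuous H := by
    fun_prop
  have hexp : ∀ x : ℝ, Real.exp (x / c) / c ≠ 0 := fun x =>
    div_ne_zero (exp_ne_zero _) hc.ne'
  set L := (p.roots.toFinset).filter (· < r) with hL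
  by_cases hLne : L.Nonempty
  · -- interior Rolle between the largest smaller root and r
    set r' := L.max' hLne with hr'
    have hr'mem : r' ∈ L := L.max'_mem hLne
    have hr'lt : r' < r := (Finset.mem_filter.mp hr'mem).2
    have hr'root : p.eval r' = 0 := by
      have := (Finset.mem_filter.mp hr'mem).1
      have := Multiset.mem_toFinset.mp this
      exact (mem_roots hp0).mp this
    have hHr' : H r' = 0 := by simp [hH, hr'root]
    have hHr : H r = 0 := by simp [hH, hr]
    obtain ⟨x, hx, hx0⟩ := exists_hasDerivAt_eq_zero hr'lt hcont.continuousOn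
      (hHr'.trans hHr.symm) (fun y _ => hder y)
    refine ⟨x, ?_, hx.2, ?_⟩
    · exact (mul_eq_zero.mp hx0).resolve_left (hexp x)
    · intro s hs hsr
      have hsL : s ∈ L := Finset.mem_filter.mpr
        ⟨Multiset.mem_toFinset.mpr ((mem_roots hp0).mpr hs), hsr⟩
      exact lt_of_le_of_lt (L.le_max' s hsL) hx.1
  · -- no roots below r : use decay at -∞ and an interior maximum of H²
    have hnoroot : ∀ s, p.eval s = 0 → ¬ s < r := by
      intro s hs hsr
      exact hLne ⟨s, Finset.mem_filter.mpr
        ⟨Multiset.mem_toFinset.mpr ((mem_roots hp0).mpr hs), hsr⟩⟩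
    set G : ℝ → ℝ := fun x => (H x) ^ 2 with hG
    have hGder : ∀ x, HasDerivAt G (2 * H x ^ 1 * (Real.exp (x / c) / c * q.eval x)) x :=
      fun x => (hder x).pow 2
    have hGa : 0 < G (r - 1) := by
      have : p.eval (r - 1) ≠ 0 := fun h => hnoroot _ h (by linarith)
      have hH0 : H (r - 1) ≠ 0 := mul_ne_zero this (exp_ne_zero _)
      positivity
    have hGtendsto : Tendsto G atBot (𝓝 0) := by
      have h := tendsto_poly_exp_atBot (p * p) (c / 2) (by positivity)
      convert h using 2 with x
      simp only [hG, hH, eval_mul, mul_pow]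
      rw [show rexp (x / c) ^ 2 = rexp (x / (c / 2)) by
        rw [sq, ← Real.exp_add]; congr 1; field_simp; ring, sq]
    have hev : ∀ᶠ t in atBot, G t < G (r - 1) := hGtendsto.eventually (gt_mem_nhds hGa)
    obtain ⟨b0, hb0⟩ := eventually_atBot.mp hev
    set b := min b0 (r - 2) with hb
    have hbr : b < r - 1 := lt_of_le_of_lt (min_le_right _ _) (by linarith)
    have hbG : G b < G (r - 1) := hb0 b (min_le_left _ _)
    have hcompact : IsCompact (Icc b r) := isCompact_Icc
    have hGcont : Continuous G := by fun_prop
    obtain ⟨x, hxmem, hxmax⟩ := hcompact.exists_isMaxOn ⟨b, ⟨le_refl b, by linarith⟩⟩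
      hGcont.continuousOn
    have hamem : r - 1 ∈ Icc b r := ⟨hbr.le, by linarith⟩
    have hxa : G (r - 1) ≤ G x := hxmax hamem
    have hGr : G r = 0 := by simp [hG, hH, hr]
    have hxb : x ≠ b := by rintro rfl; linarith
    have hxr : x ≠ r := by rintro rfl; rw [hGr] at hxa; linarith
    have hxIoo : x ∈ Ioo b r := ⟨lt_of_le_of_ne hxmem.1 (Ne.symm hxb), lt_of_le_of_ne hxmem.2 hxr⟩
    have hlocal : IsLocalMax G x := hxmax.isLocalMax (Icc_mem_nhds hxIoo.1 hxIoo.2)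
    have hderiv0 : deriv G x = 0 := hlocal.deriv_eq_zero
    have : 2 * H x ^ 1 * (Real.exp (x / c) / c * q.eval x) = 0 := by
      rw [← (hGder x).deriv]; exact hderiv0
    have hHx : H x ≠ 0 := by
      intro h0
      have : G x = 0 := by simp [hG, h0]
      linarith
    have hqx : q.eval x = 0 := by
      rcases mul_eq_zero.mp this with h | h
      · exfalso; apply hHx; simpa using h
      · exact (mul_eq_zero.mp h).resolve_left (hexp x)
    exact ⟨x, hqx, hxIoo.2, fun s hs hsr => absurd hsr (hnoroot s hs)⟩

lemma tendsto_poly_exp_atTop' (P : ℝ[X]) (c : ℝ) (hc : c < 0) :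
    Tendsto (fun x => P.eval x * exp (x / c)) atTop (𝓝 0) := by
  have h := tendsto_poly_exp_atTop P (-1 / c) (by rw [div_pos_iff]; right; exact ⟨by norm_num, hc⟩)
  convert h using 4 with x
  field_simp

lemma exists_right_root (p : ℝ[X]) (hp0 : p ≠ 0) (c : ℝ) (hc : c < 0) (r : ℝ)
    (hr : p.eval r = 0) :
    ∃ x, (p + C c * p.derivative).eval x = 0 ∧ r < x ∧
      ∀ s, p.eval s = 0 → r < s → x < s := by
  classical
  set q := p + C c * p.derivative with hq
  set H : ℝ → ℝ := fun x => p.eval x * exp (x / c) with hH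
  have hder : ∀ x, HasDerivAt H (Real.exp (x / c) / c * q.eval x) x :=
    fun x => hasDerivAt_H p c hc.ne x
  have hcont : Continuous H := by fun_prop
  have hexp : ∀ x : ℝ, Real.exp (x / c) / c ≠ 0 := fun x =>
    div_ne_zero (exp_ne_zero _) hc.ne
  set L := (p.roots.toFinset).filter (r < ·) with hL
  by_cases hLne : L.Nonempty
  · set r' := L.min' hLne with hr'
    have hr'mem : r' ∈ L := L.min'_mem hLne
    have hr'lt : r < r' := (Finset.mem_filter.mp hr'mem).2
    have hr'root : p.eval r' = 0 := by
      have := (Finset.mem_filter.mp hr'mem).1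
      have := Multiset.mem_toFinset.mp this
      exact (mem_roots hp0).mp this
    have hHr' : H r' = 0 := by simp [hH, hr'root]
    have hHr : H r = 0 := by simp [hH, hr]
    obtain ⟨x, hx, hx0⟩ := exists_hasDerivAt_eq_zero hr'lt hcont.continuousOn
      (hHr.trans hHr'.symm) (fun y _ => hder y)
    refine ⟨x, ?_, hx.1, ?_⟩
    · exact (mul_eq_zero.mp hx0).resolve_left (hexp x)
    · intro s hs hsr
      have hsL : s ∈ L := Finset.mem_filter.mpr
        ⟨Multiset.mem_toFinset.mpr ((mem_roots hp0).mpr hs), hsr⟩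
      exact lt_of_lt_of_le hx.2 (L.min'_le s hsL)
  · have hnoroot : ∀ s, p.eval s = 0 → ¬ r < s := by
      intro s hs hsr
      exact hLne ⟨s, Finset.mem_filter.mpr
        ⟨Multiset.mem_toFinset.mpr ((mem_roots hp0).mpr hs), hsr⟩⟩
    set G : ℝ → ℝ := fun x => (H x) ^ 2 with hG
    have hGder : ∀ x, HasDerivAt G (2 * H x ^ 1 * (Real.exp (x / c) / c * q.eval x)) x :=
      fun x => (hder x).pow 2
    have hGa : 0 < G (r + 1) := by
      have : p.eval (r + 1) ≠ 0 := fun h => hnoroot _ h (by linarith)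
      have hH0 : H (r + 1) ≠ 0 := mul_ne_zero this (exp_ne_zero _)
      positivity
    have hGtendsto : Tendsto G atTop (𝓝 0) := by
      have h := tendsto_poly_exp_atTop' (p * p) (c / 2) (by linarith)
      convert h using 2 with x
      simp only [hG, hH, eval_mul, mul_pow]
      rw [show rexp (x / c) ^ 2 = rexp (x / (c / 2)) by
        rw [sq, ← Real.exp_add]; congr 1; field_simp; ring, sq]
    have hev : ∀ᶠ t in atTop, G t < G (r + 1) := hGtendsto.eventually (gt_mem_nhds hGa)
    obtain ⟨b0, hb0⟩ := eventually_atTop.mp hev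
    set b := max b0 (r + 2) with hb
    have hbr : r + 1 < b := lt_of_lt_of_le (by linarith) (le_max_right _ _)
    have hbG : G b < G (r + 1) := hb0 b (le_max_left _ _)
    have hcompact : IsCompact (Icc r b) := isCompact_Icc
    have hGcont : Continuous G := by fun_prop
    obtain ⟨x, hxmem, hxmax⟩ := hcompact.exists_isMaxOn ⟨b, ⟨by linarith, le_refl b⟩⟩
      hGcont.continuousOn
    have hamem : r + 1 ∈ Icc r b := ⟨by linarith, hbr.le⟩
    have hxa : G (r + 1) ≤ G x := hxmax hamem
    have hGr : G r = 0 := by simp [hG, hH, hr]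
    have hxb : x ≠ b := by rintro rfl; linarith
    have hxr : x ≠ r := by rintro rfl; rw [hGr] at hxa; linarith
    have hxIoo : x ∈ Ioo r b := ⟨lt_of_le_of_ne hxmem.1 (Ne.symm hxr), lt_of_le_of_ne hxmem.2 hxb⟩
    have hlocal : IsLocalMax G x := hxmax.isLocalMax (Icc_mem_nhds hxIoo.1 hxIoo.2)
    have hderiv0 : deriv G x = 0 := hlocal.deriv_eq_zero
    have : 2 * H x ^ 1 * (Real.exp (x / c) / c * q.eval x) = 0 := by
      rw [← (hGder x).deriv]; exact hderiv0
    have hHx : H x ≠ 0 := by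
      intro h0
      have : G x = 0 := by simp [hG, h0]
      linarith
    have hqx : q.eval x = 0 := by
      rcases mul_eq_zero.mp this with h | h
      · exfalso; apply hHx; simpa using h
      · exact (mul_eq_zero.mp h).resolve_left (hexp x)
    exact ⟨x, hqx, hxIoo.1, fun s hs hsr => absurd hsr (hnoroot s hs)⟩

lemma count_lemma (p : ℝ[X]) (hdeg : 1 ≤ p.natDegree) (c : ℝ) (hc : c ≠ 0)
    (hsplit : Multiset.card p.roots = p.natDegree)
    (φ : ℝ → ℝ) (hinj : Set.InjOn φ p.roots.toFinset)
    (hroot : ∀ r ∈ p.roots.toFinset, (p + C c * p.derivative).eval (φ r) = 0)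
    (havoid : ∀ r ∈ p.roots.toFinset, p.eval (φ r) ≠ 0) :
    Multiset.card (p + C c * p.derivative).roots = (p + C c * p.derivative).natDegree ∧
    p.roots.toFinset.card
      + ((p.roots.toFinset).filter (fun r => 2 ≤ rootMultiplicity r p)).card
      ≤ (p + C c * p.derivative).roots.toFinset.card ∧
    (p + C c * p.derivative).natDegree = p.natDegree := by
  classical
  have hp0 : p ≠ 0 := fun h => by simp [h] at hdeg
  set q := p + C c * p.derivative with hqdef
  have hdegq : q.degree = p.degree := by
    apply degree_add_eq_left_of_degree_lt
    calc (C c * p.derivative).degree ≤ (C c).degree + p.derivative.degree := degree_mul_le _ _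
      _ ≤ 0 + p.derivative.degree := add_le_add_left degree_C_le _
      _ = p.derivative.degree := zero_add _
      _ < p.degree := degree_derivative_lt hp0
  have hnatq : q.natDegree = p.natDegree := natDegree_eq_of_degree_eq hdegq
  have hq0 : q ≠ 0 := fun h => by
    rw [h, natDegree_zero] at hnatq; omega
  set T := p.roots.toFinset with hT
  set B := T.filter (fun r => 2 ≤ rootMultiplicity r p) with hB
  set A := T.image φ with hA
  have hTroot : ∀ r ∈ T, p.eval r = 0 := fun r hr =>
    (mem_roots hp0).mp (Multiset.mem_toFinset.mp hr)
  have hdisj : Disjoint A B := by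
    rw [Finset.disjoint_left]
    intro x hx hxB
    obtain ⟨r, hr, rfl⟩ := Finset.mem_image.mp hx
    exact havoid r hr (hTroot _ (Finset.mem_filter.mp hxB).1)
  -- every element of A ∪ B is a root of q
  have hsub : A ∪ B ⊆ q.roots.toFinset := by
    intro x hx
    rw [Multiset.mem_toFinset, mem_roots hq0]
    rcases Finset.mem_union.mp hx with h | h
    · obtain ⟨r, hr, rfl⟩ := Finset.mem_image.mp h
      exact hroot r hr
    · obtain ⟨hxT, hx2⟩ := Finset.mem_filter.mp h
      have hm := hx2
      have hpow : (X - C x) ^ (rootMultiplicity x p) ∣ p := pow_rootMultiplicity_dvd p x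
      have hder : (X - C x) ^ (rootMultiplicity x p - 1) ∣ p.derivative :=
        pow_sub_one_dvd_derivative_of_pow_dvd hpow
      have hd1 : (X - C x) ∣ p.derivative :=
        dvd_trans (dvd_pow_self _ (by omega)) hder
      have hevald : p.derivative.eval x = 0 := dvd_iff_isRoot.mp hd1
      show q.eval x = 0
      simp [hqdef, hTroot x hxT, hevald]
  -- multiplicity bound on B
  have hmultB : ∀ r ∈ B, rootMultiplicity r p - 1 ≤ rootMultiplicity r q := by
    intro r hrB
    obtain ⟨hrT, hr2⟩ := Finset.mem_filter.mp hrB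
    rw [le_rootMultiplicity_iff hq0]
    have hpow : (X - C r) ^ (rootMultiplicity r p) ∣ p := pow_rootMultiplicity_dvd p r
    have h1 : (X - C r) ^ (rootMultiplicity r p - 1) ∣ p :=
      dvd_trans (pow_dvd_pow _ (by omega)) hpow
    have h2 : (X - C r) ^ (rootMultiplicity r p - 1) ∣ p.derivative :=
      pow_sub_one_dvd_derivative_of_pow_dvd hpow
    exact dvd_add h1 (h2.mul_left _)
  -- multiplicity ≥ 1 on A
  have hmultA : ∀ x ∈ A, 1 ≤ rootMultiplicity x q := by
    intro x hx
    obtain ⟨r, hr, rfl⟩ := Finset.mem_image.mp hx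
    exact (rootMultiplicity_pos hq0).mpr (hroot r hr)
  have hcardA : A.card = T.card := Finset.card_image_of_injOn hinj
  -- sum of multiplicities of p over T equals natDegree p
  have hsumT : ∑ r ∈ T, rootMultiplicity r p = p.natDegree := by
    rw [← hsplit, ← Multiset.toFinset_sum_count_eq p.roots]
    exact Finset.sum_congr rfl fun r _ => (count_roots p).symm
  have hmult1 : ∀ r ∈ T, 1 ≤ rootMultiplicity r p := fun r hr =>
    (rootMultiplicity_pos hp0).mpr (hTroot r hr)
  -- sum over B of (m - 1) = sum over T of (m - 1)
  have hsumB : ∑ r ∈ B, (rootMultiplicity r p - 1) = ∑ r ∈ T, (rootMultiplicity r p - 1) := by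
    apply Finset.sum_subset (Finset.filter_subset _ _)
    intro x hxT hxB
    have : ¬ 2 ≤ rootMultiplicity x p := by
      intro h2; exact hxB (Finset.mem_filter.mpr ⟨hxT, h2⟩)
    omega
  have hsumT1 : ∑ r ∈ T, (rootMultiplicity r p - 1) + T.card = p.natDegree := by
    rw [← hsumT, Finset.card_eq_sum_ones T, ← Finset.sum_add_distrib]
    exact Finset.sum_congr rfl fun r hr => by have := hmult1 r hr; omega
  -- the key chain
  have hchain : p.natDegree ≤ ∑ x ∈ A ∪ B, rootMultiplicity x q := by
    rw [Finset.sum_union hdisj]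
    have h1 : T.card ≤ ∑ x ∈ A, rootMultiplicity x q := by
      rw [← hcardA, Finset.card_eq_sum_ones]
      exact Finset.sum_le_sum hmultA
    have h2 : ∑ r ∈ B, (rootMultiplicity r p - 1) ≤ ∑ x ∈ B, rootMultiplicity x q :=
      Finset.sum_le_sum hmultB
    have := hsumB
    omega
  have hupper : ∑ x ∈ A ∪ B, rootMultiplicity x q ≤ Multiset.card q.roots := by
    calc ∑ x ∈ A ∪ B, rootMultiplicity x q = ∑ x ∈ A ∪ B, q.roots.count x :=
          Finset.sum_congr rfl fun x _ => (count_roots q).symm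
      _ ≤ Multiset.card q.roots := sum_count_le _ _
  have hcardle : Multiset.card q.roots ≤ q.natDegree := q.card_roots'
  refine ⟨by omega, ?_, hnatq⟩
  calc T.card + B.card = (A ∪ B).card := by
        rw [Finset.card_union_of_disjoint hdisj, hcardA]
      _ ≤ q.roots.toFinset.card := Finset.card_le_card hsub

set_option maxHeartbeats 1000000 in
/-- If `p ∈ ℝ[t]` is real-rooted of degree `≥ 1` and `c ∈ ℝ`, then `p + c·p'` is
real-rooted. Moreover, if `c ≠ 0` and not all roots of `p` are simple (i.e. the number of
distinct roots of `p` is less than its degree), then `p + c·p'` has strictly more distinct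
roots than `p`. -/
theorem realRooted_add_smul_derivative (p : Polynomial ℝ) (hdeg : 1 ≤ p.natDegree)
    (hp : RealRooted p) (c : ℝ) :
    RealRooted (p + Polynomial.C c * Polynomial.derivative p) ∧
    (c ≠ 0 → p.roots.toFinset.card < p.natDegree →
      p.roots.toFinset.card <
        (p + Polynomial.C c * Polynomial.derivative p).roots.toFinset.card) := by
  classical
  have hp0 : p ≠ 0 := fun h => by simp [h] at hdeg
  by_cases hc : c = 0
  · subst hc
    rw [show Polynomial.C (0:ℝ) = 0 from Polynomial.C_0, zero_mul, add_zero]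
    exact ⟨hp, fun h _ => absurd rfl h⟩
  · have hsplit : Multiset.card p.roots = p.natDegree :=
      card_roots_of_im_eq_zero p hp0 hp
    set T := p.roots.toFinset with hT
    -- construct the injective family of new roots
    have hφ : ∃ φ : ℝ → ℝ, Set.InjOn φ T ∧
        (∀ r ∈ T, (p + Polynomial.C c * Polynomial.derivative p).eval (φ r) = 0) ∧
        (∀ r ∈ T, p.eval (φ r) ≠ 0) := by
      have hTroot : ∀ r ∈ T, p.eval r = 0 := fun r hr =>
        (mem_roots hp0).mp (Multiset.mem_toFinset.mp hr)
      rcases lt_or_gt_of_ne hc with hneg | hpos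
      · -- c < 0 : roots to the right
        set φ : ℝ → ℝ := fun r =>
          if h : p.eval r = 0 then Classical.choose (exists_right_root p hp0 c hneg r h)
          else 0 with hφdef
        have hspec : ∀ r ∈ T, (p + Polynomial.C c * Polynomial.derivative p).eval (φ r) = 0 ∧
            r < φ r ∧ ∀ s, p.eval s = 0 → r < s → φ r < s := by
          intro r hr
          have hre := hTroot r hr
          simp only [hφdef, dif_pos hre]
          exact Classical.choose_spec (exists_right_root p hp0 c hneg r hre)
        refine ⟨φ, ?_, fun r hr => (hspec r hr).1, ?_⟩
        · intro a ha b hb hab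
          by_contra hne
          rcases lt_or_gt_of_ne hne with h | h
          · have h1 : φ a < b := (hspec a ha).2.2 b (hTroot b hb) h
            have h2 : b < φ b := (hspec b hb).2.1
            rw [hab] at h1; exact absurd h1 (lt_asymm h2)
          · have h1 : φ b < a := (hspec b hb).2.2 a (hTroot a ha) h
            have h2 : a < φ a := (hspec a ha).2.1
            rw [hab] at h2; exact absurd h2 (lt_asymm h1)
        · intro r hr hzero
          have := (hspec r hr).2.2 (φ r) hzero (hspec r hr).2.1
          exact lt_irrefl _ this
      · -- c > 0 : roots to the left
        set φ : ℝ → ℝ := fun r =>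
          if h : p.eval r = 0 then Classical.choose (exists_left_root p hp0 c hpos r h)
          else 0 with hφdef
        have hspec : ∀ r ∈ T, (p + Polynomial.C c * Polynomial.derivative p).eval (φ r) = 0 ∧
            φ r < r ∧ ∀ s, p.eval s = 0 → s < r → s < φ r := by
          intro r hr
          have hre := hTroot r hr
          simp only [hφdef, dif_pos hre]
          exact Classical.choose_spec (exists_left_root p hp0 c hpos r hre)
        refine ⟨φ, ?_, fun r hr => (hspec r hr).1, ?_⟩
        · intro a ha b hb hab
          by_contra hne
          rcases lt_or_gt_of_ne hne with h | h
          · have h1 : a < φ b := (hspec b hb).2.2 a (hTroot a ha) h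
            have h2 : φ a < a := (hspec a ha).2.1
            rw [hab] at h2; exact absurd h2 (lt_asymm h1)
          · have h1 : b < φ a := (hspec a ha).2.2 b (hTroot b hb) h
            have h2 : φ b < b := (hspec b hb).2.1
            rw [hab] at h1; exact absurd h1 (lt_asymm h2)
        · intro r hr hzero
          have := (hspec r hr).2.2 (φ r) hzero (hspec r hr).2.1
          exact lt_irrefl _ this
    obtain ⟨φ, hinj, hroot, havoid⟩ := hφ
    obtain ⟨hcard, hfin, hnat⟩ := count_lemma p hdeg c hc hsplit φ hinj hroot havoid
    have hq0 : (p + Polynomial.C c * Polynomial.derivative p) ≠ 0 := fun h => by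
      rw [h, natDegree_zero] at hnat; omega
    refine ⟨realRooted_of_card_roots _ hq0 hcard, fun _ hlt => ?_⟩
    -- there is a multiple root
    have hBne : (T.filter (fun r => 2 ≤ rootMultiplicity r p)).Nonempty := by
      by_contra hne
      have hall : ∀ r ∈ T, rootMultiplicity r p ≤ 1 := by
        intro r hr
        by_contra h2
        exact hne ⟨r, Finset.mem_filter.mpr ⟨hr, by omega⟩⟩
      have hsumT : ∑ r ∈ T, rootMultiplicity r p = p.natDegree := by
        rw [← hsplit, ← Multiset.toFinset_sum_count_eq p.roots]
        exact Finset.sum_congr rfl fun r _ => (count_roots p).symm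
      have : p.natDegree ≤ T.card := by
        rw [← hsumT]
        calc ∑ r ∈ T, rootMultiplicity r p ≤ ∑ _r ∈ T, 1 := Finset.sum_le_sum hall
          _ = T.card := by rw [Finset.card_eq_sum_ones]
      omega
    have hBpos : 0 < (T.filter (fun r => 2 ≤ rootMultiplicity r p)).card :=
      Finset.card_pos.mpr hBne
    simp only [hT] at hfin hlt hBpos ⊢
    omega
end
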